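/- arXiv:math/0605571 — 2 statements merged into one kernel-verified Lean document; each statement's English description precedes it below -/
import Mathlib

section
/- Let 𝔻 be a connected oriented ribbon graph. Then, in the field of fractions of ℤ[A, A⁻¹], one has A^{−e(𝔻)} ⟨𝔻⟩ = A^{2−2v(𝔻)} · C(𝔻; −A⁴, A⁻²δ, δ⁻²), where δ = −A² − A⁻². (This is the statement that the Kauffman bracket of a connected link projection is the given specialization of the Bollobás–Riordan–Tutte polynomial of its all-A ribbon graph.) -/
open Equiv Finset
open Relation Equiv

section Counting
variable {α : Type*} {r s : α → α → Prop}

lemma eqvGen_collapse : ∀ {a b}, EqvGen (EqvGen s) a b → EqvGen s a b := by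
  intro a b h
  induction h with
  | rel _ _ h => exact h
  | refl _ => exact EqvGen.refl _
  | symm _ _ _ ih => exact ih.symm _ _
  | trans _ _ _ _ _ ih1 ih2 => exact ih1.trans _ _ _ ih2

lemma eqvGen_mono' (h : ∀ a b, r a b → EqvGen s a b) :
    ∀ {a b}, EqvGen r a b → EqvGen s a b := fun hab =>
  eqvGen_collapse (EqvGen.mono h _ _ hab)

lemma orbCount_le (h : ∀ a b, r a b → EqvGen s a b) [Finite α] :
    Nat.card (Quot s) ≤ Nat.card (Quot r) := by
  apply Nat.card_le_card_of_surjective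
    (Quot.lift (fun a => Quot.mk s a) (fun a b hab => Quot.eq.2 (h a b hab)))
  intro x
  induction x using Quot.ind
  exact ⟨Quot.mk r _, rfl⟩

lemma orbCount_congr (h : ∀ a b, EqvGen r a b ↔ EqvGen s a b) [Finite α] :
    Nat.card (Quot r) = Nat.card (Quot s) :=
  le_antisymm (orbCount_le (fun a b hab => (h a b).2 (EqvGen.rel a b hab)))
    (orbCount_le (fun a b hab => (h a b).1 (EqvGen.rel a b hab)))

variable (r) in
/-- join of a relation with a single pair -/
def joinRel (x y : α) : α → α → Prop := fun a b => r a b ∨ (a = x ∧ b = y)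

variable {x y : α}

lemma eqvGen_joinRel_cases {a b : α} (h : EqvGen (joinRel r x y) a b) :
    EqvGen r a b ∨ (EqvGen r a x ∧ EqvGen r y b) ∨ (EqvGen r a y ∧ EqvGen r x b) := by
  induction h with
  | rel a b hab =>
    rcases hab with hab | ⟨rfl, rfl⟩
    · exact Or.inl (EqvGen.rel _ _ hab)
    · exact Or.inr (Or.inl ⟨EqvGen.refl _, EqvGen.refl _⟩)
  | refl a => exact Or.inl (EqvGen.refl _)
  | symm a b _ ih =>
    rcases ih with h | ⟨h1, h2⟩ | ⟨h1, h2⟩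
    · exact Or.inl (h.symm _ _)
    · exact Or.inr (Or.inr ⟨h2.symm _ _, h1.symm _ _⟩)
    · exact Or.inr (Or.inl ⟨h2.symm _ _, h1.symm _ _⟩)
  | trans a b c _ _ ih1 ih2 =>
    rcases ih1 with h | ⟨h1, h2⟩ | ⟨h1, h2⟩ <;>
      rcases ih2 with h' | ⟨h1', h2'⟩ | ⟨h1', h2'⟩
    · exact Or.inl (h.trans _ _ _ h')
    · exact Or.inr (Or.inl ⟨h.trans _ _ _ h1', h2'⟩)
    · exact Or.inr (Or.inr ⟨h.trans _ _ _ h1', h2'⟩)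
    · exact Or.inr (Or.inl ⟨h1, h2.trans _ _ _ h'⟩)
    · exact Or.inl (h1.trans _ _ _ (((h2.trans _ _ _ h1').symm _ _).trans _ _ _ h2'))
    · exact Or.inl (h1.trans _ _ _ h2')
    · exact Or.inr (Or.inr ⟨h1, h2.trans _ _ _ h'⟩)
    · exact Or.inl (h1.trans _ _ _ h2')
    · exact Or.inl (h1.trans _ _ _ (((h2.trans _ _ _ h1').symm _ _).trans _ _ _ h2'))

lemma eqvGen_joinRel_of (h : EqvGen r a b) : EqvGen (joinRel r x y) a b := by
  exact EqvGen.mono (fun a b hab => Or.inl hab) _ _ h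

lemma eqvGen_joinRel_pair : EqvGen (joinRel r x y) x y :=
  EqvGen.rel _ _ (Or.inr ⟨rfl, rfl⟩)

variable [Finite α]

/-- if the pair is already related, joining changes nothing -/
lemma card_joinRel_of_rel (h : EqvGen r x y) :
    Nat.card (Quot (joinRel r x y)) = Nat.card (Quot r) := by
  refine orbCount_congr fun a b => ⟨fun hab => ?_, fun hab => eqvGen_joinRel_of hab⟩
  rcases eqvGen_joinRel_cases hab with h' | ⟨h1, h2⟩ | ⟨h1, h2⟩
  · exact h'
  · exact h1.trans _ _ _ (h.trans _ _ _ h2)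
  · exact h1.trans _ _ _ ((h.symm _ _).trans _ _ _ h2)

lemma card_le_joinRel_add_one :
    Nat.card (Quot r) ≤ Nat.card (Quot (joinRel r x y)) + 1 := by
  classical
  have : Nat.card (Quot r) ≤ Nat.card (Quot (joinRel r x y) ⊕ Unit) := by
    apply Nat.card_le_card_of_injective
      (fun u => if u = Quot.mk r y then Sum.inr () else
        Sum.inl (Quot.lift (fun a => Quot.mk (joinRel r x y) a)
          (fun a b hab => Quot.eq.2 (eqvGen_joinRel_of (EqvGen.rel _ _ hab))) u))
    intro u v huv
    dsimp only at huv
    by_cases hu : u = Quot.mk r y <;> by_cases hv : v = Quot.mk r y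
    · exact hu.trans hv.symm
    · rw [if_pos hu, if_neg hv] at huv; exact absurd huv (by simp)
    · rw [if_neg hu, if_pos hv] at huv; exact absurd huv (by simp)
    · rw [if_neg hu, if_neg hv, Sum.inl.injEq] at huv
      obtain ⟨a, rfl⟩ := Quot.exists_rep u
      obtain ⟨b, rfl⟩ := Quot.exists_rep v
      rw [Quot.eq] at huv ⊢
      rcases eqvGen_joinRel_cases huv with h' | ⟨h1, h2⟩ | ⟨h1, h2⟩
      · exact h'
      · exact absurd (Quot.eq.2 (h2.symm _ _)) hv
      · exact absurd (Quot.eq.2 h1) hu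
  simpa [Nat.card_sum] using this

lemma card_joinRel_add_one_le (h : ¬ EqvGen r x y) :
    Nat.card (Quot (joinRel r x y)) + 1 ≤ Nat.card (Quot r) := by
  classical
  set f : Quot r → Quot (joinRel r x y) :=
    Quot.lift (fun a => Quot.mk (joinRel r x y) a)
      (fun a b hab => Quot.eq.2 (eqvGen_joinRel_of (EqvGen.rel _ _ hab))) with hf
  have hsurj : Function.Surjective f := by
    intro u; induction u using Quot.ind; exact ⟨Quot.mk r _, rfl⟩
  have hnotinj : ¬ Function.Injective f := by
    intro hinj
    exact h (Quot.eq.1 (hinj (show f (Quot.mk r x) = f (Quot.mk r y) from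
      Quot.eq.2 eqvGen_joinRel_pair)))
  rcases Nat.lt_or_ge (Nat.card (Quot (joinRel r x y))) (Nat.card (Quot r)) with hlt | hge
  · omega
  · exfalso
    have hle := Nat.card_le_card_of_surjective f hsurj
    have hcard : Nat.card (Quot r) = Nat.card (Quot (joinRel r x y)) := le_antisymm hge hle
    have : Function.Bijective f := by
      rw [Nat.bijective_iff_surjective_and_card]
      exact ⟨hsurj, hcard⟩
    exact hnotinj this.1

lemma card_joinRel_of_not_rel (h : ¬ EqvGen r x y) :
    Nat.card (Quot (joinRel r x y)) + 1 = Nat.card (Quot r) :=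
  le_antisymm (card_joinRel_add_one_le h) card_le_joinRel_add_one

end Counting

section PermCount
set_option linter.unusedSectionVars false
variable {α : Type*} [Fintype α] [DecidableEq α]

/-- the relation of a function -/
def fRel (f : α → α) : α → α → Prop := fun u v => f u = v

/-- number of cycles of a permutation -/
noncomputable def cN (σ : Perm α) : ℕ := Nat.card (Quot (fRel ⇑σ))

lemma pA (σ : Perm α) (n : ℕ) (x : α) : (σ ^ (n + 1)) x = (σ ^ n) (σ x) := by
  rw [pow_succ, Perm.mul_apply]

lemma pB (σ : Perm α) (n : ℕ) (x : α) : (σ ^ (n + 1)) x = σ ((σ ^ n) x) := by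
  rw [pow_succ', Perm.mul_apply]

lemma eqvGen_fRel_pow (σ : Perm α) (k : ℕ) (x : α) :
    EqvGen (fRel ⇑σ) x ((σ ^ k) x) := by
  induction k with
  | zero => simpa using EqvGen.refl x
  | succ k ih => exact ih.trans _ _ _ (EqvGen.rel _ _ (pB σ k x).symm)

lemma pow_fix {σ : Perm α} {N : ℕ} {u : α} (h : (σ ^ N) u = u) (q : ℕ) :
    ((σ ^ N) ^ q) u = u := by
  induction q with
  | zero => simp
  | succ q ih => rw [pow_succ', Perm.mul_apply, ih, h]

lemma exists_pow_lt_of_fix {σ : Perm α} {N : ℕ} {u v : α} (hN : 0 < N) (hu : (σ ^ N) u = u)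
    {i : ℕ} (hi : (σ ^ i) u = v) : ∃ j < N, (σ ^ j) u = v := by
  refine ⟨i % N, Nat.mod_lt _ hN, ?_⟩
  conv_rhs => rw [← hi, ← Nat.mod_add_div i N]
  rw [pow_add, Perm.mul_apply, pow_mul, pow_fix hu]

lemma sameCycle_iff_exists_pow_lt {σ : Perm α} {N : ℕ} {u v : α} (hN : 0 < N)
    (hu : (σ ^ N) u = u) : σ.SameCycle u v ↔ ∃ j < N, (σ ^ j) u = v := by
  constructor
  · intro h
    obtain ⟨i, _, _, hi⟩ := Perm.SameCycle.exists_pow_eq σ h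
    exact exists_pow_lt_of_fix hN hu hi
  · rintro ⟨j, _, hj⟩
    exact ⟨(j : ℤ), by simpa using hj⟩

lemma eqvGen_fRel_iff_sameCycle {σ : Perm α} {u v : α} :
    EqvGen (fRel ⇑σ) u v ↔ σ.SameCycle u v := by
  constructor
  · intro h
    induction h with
    | rel a b hab => exact ⟨1, by simpa [fRel] using hab⟩
    | refl a => exact Perm.SameCycle.refl _ _
    | symm a b _ ih => exact ih.symm
    | trans a b c _ _ ih1 ih2 => exact ih1.trans ih2
  · intro h
    obtain ⟨i, _, _, hi⟩ := Perm.SameCycle.exists_pow_eq σ h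
    exact hi ▸ eqvGen_fRel_pow σ i u

/-- chain lemma: `σ * swap a b` agrees with iterates of `σ` while avoiding `{a,b}` -/
lemma chain {σ : Perm α} {a b : α} :
    ∀ (k : ℕ) (y : α), (∀ i < k, (σ ^ i) y ≠ a ∧ (σ ^ i) y ≠ b) →
      ((σ * swap a b) ^ k) y = (σ ^ k) y := by
  intro k
  induction k with
  | zero => intro y _; rfl
  | succ k ih =>
    intro y hy
    have h0 := hy 0 (Nat.succ_pos k)
    simp only [pow_zero, Perm.one_apply] at h0
    have hstep : (σ * swap a b) y = σ y := by
      simp [Perm.mul_apply, swap_apply_of_ne_of_ne h0.1 h0.2]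
    rw [pA, hstep, ih (σ y) (fun i hi => by
      have := hy (i + 1) (by omega)
      rw [pA] at this
      exact this), ← pA]

/-- The fundamental dichotomy: multiplying by `swap a b` toggles whether `a, b`
lie in the same cycle. -/
lemma sameCycle_mul_swap_iff {σ : Perm α} {a b : α} (hab : a ≠ b) :
    σ.SameCycle a b ↔ ¬ (σ * swap a b).SameCycle a b := by
  set τ := swap a b with hτ
  have hja : (σ * τ) a = σ b := by simp [hτ, Perm.mul_apply]
  have hex : ∃ m, (σ ^ m) (σ b) = a ∨ (σ ^ m) (σ b) = b := by
    refine ⟨orderOf σ - 1, Or.inr ?_⟩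
    have h1 : (σ ^ (orderOf σ - 1 + 1)) b = b := by
      rw [Nat.sub_add_cancel (orderOf_pos σ), pow_orderOf_eq_one]; rfl
    rw [pA] at h1
    exact h1
  obtain ⟨m, hm⟩ : ∃ m, m = Nat.find hex := ⟨_, rfl⟩
  have hspec : (σ ^ m) (σ b) = a ∨ (σ ^ m) (σ b) = b := hm ▸ Nat.find_spec hex
  have hmin : ∀ i < m, (σ ^ i) (σ b) ≠ a ∧ (σ ^ i) (σ b) ≠ b := by
    intro i hi
    have := Nat.find_min hex (hm ▸ hi)
    tauto
  have hchain : ((σ * τ) ^ m) (σ b) = (σ ^ m) (σ b) := chain m (σ b) hmin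
  have hstep1 : ((σ * τ) ^ (m + 1)) a = (σ ^ m) (σ b) := by
    rw [pA, hja, hchain]
  rcases hspec with hcase | hcase
  · -- σ^m (σ b) = a : SameCycle σ a b holds, ¬SameCycle (σ*τ) a b
    have hsc : σ.SameCycle a b := by
      refine Perm.SameCycle.symm ⟨((m + 1 : ℕ) : ℤ), ?_⟩
      rw [zpow_natCast, pA]
      exact hcase
    have hfix : ((σ * τ) ^ (m + 1)) a = a := by rw [hstep1]; exact hcase
    have hnsc : ¬ (σ * τ).SameCycle a b := by
      intro h
      obtain ⟨j, hj, hje⟩ := (sameCycle_iff_exists_pow_lt (Nat.succ_pos m) hfix).1 h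
      rcases Nat.eq_zero_or_pos j with rfl | hj0
      · exact hab (by simpa using hje)
      · obtain ⟨j', rfl⟩ : ∃ j', j = j' + 1 := ⟨j - 1, by omega⟩
        rw [pA, hja] at hje
        rcases Nat.lt_or_ge j' m with hlt | hge
        · rw [chain j' (σ b) (fun i hi => hmin i (by omega))] at hje
          exact (hmin j' hlt).2 hje
        · have hjm : j' = m := by omega
          subst hjm
          rw [hchain, hcase] at hje
          exact hab hje
    exact iff_of_true hsc hnsc
  · -- σ^m (σ b) = b : ¬SameCycle σ a b, SameCycle (σ*τ) a b
    have hsc : (σ * τ).SameCycle a b := by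
      refine ⟨((m + 1 : ℕ) : ℤ), ?_⟩
      rw [zpow_natCast, hstep1]
      exact hcase
    have hfixb : (σ ^ (m + 1)) b = b := by rw [pA]; exact hcase
    have hnsc : ¬ σ.SameCycle a b := by
      intro h
      obtain ⟨j, hj, hje⟩ := (sameCycle_iff_exists_pow_lt (Nat.succ_pos m) hfixb).1 h.symm
      rcases Nat.eq_zero_or_pos j with rfl | hj0
      · exact hab (Eq.symm (by simpa using hje))
      · obtain ⟨j', rfl⟩ : ∃ j', j = j' + 1 := ⟨j - 1, by omega⟩
        rw [pA] at hje
        rcases Nat.lt_or_ge j' m with hlt | hge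
        · exact (hmin j' hlt).1 hje
        · have hjm : j' = m := by omega
          subst hjm
          rw [hcase] at hje
          exact hab hje.symm
    exact iff_of_false hnsc (not_not_intro hsc)
end PermCount

section LemmaT
set_option linter.unusedSectionVars false
variable {α : Type*} [Fintype α] [DecidableEq α] {σ p q : Perm α} {a b : α}

lemma joinRel_eqvGen_mul_swap (hab : a ≠ b) : ∀ u v,
    EqvGen (joinRel (fRel ⇑σ) a b) u v ↔ EqvGen (joinRel (fRel ⇑(σ * swap a b)) a b) u v := by
  have pair1 : EqvGen (joinRel (fRel ⇑(σ * swap a b)) a b) a b := eqvGen_joinRel_pair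
  have pair2 : EqvGen (joinRel (fRel ⇑σ) a b) a b := eqvGen_joinRel_pair
  intro u v
  constructor
  · apply eqvGen_mono'
    rintro u v (huv | ⟨rfl, rfl⟩)
    · rcases eq_or_ne u a with rfl | hua
      · refine pair1.trans _ _ _ (EqvGen.rel _ _ (Or.inl ?_))
        simp only [fRel, Perm.mul_apply, swap_apply_right]
        exact huv
      · rcases eq_or_ne u b with rfl | hub
        · refine (pair1.symm _ _).trans _ _ _ (EqvGen.rel _ _ (Or.inl ?_))
          simp only [fRel, Perm.mul_apply, swap_apply_left]
          exact huv
        · refine EqvGen.rel _ _ (Or.inl ?_)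
          simp only [fRel, Perm.mul_apply, swap_apply_of_ne_of_ne hua hub]
          exact huv
    · exact pair1
  · apply eqvGen_mono'
    rintro u v (huv | ⟨rfl, rfl⟩)
    · simp only [fRel, Perm.mul_apply] at huv
      rcases eq_or_ne u a with rfl | hua
      · rw [swap_apply_left] at huv
        exact pair2.trans _ _ _ (EqvGen.rel _ _ (Or.inl huv))
      · rcases eq_or_ne u b with rfl | hub
        · rw [swap_apply_right] at huv
          exact (pair2.symm _ _).trans _ _ _ (EqvGen.rel _ _ (Or.inl huv))
        · rw [swap_apply_of_ne_of_ne hua hub] at huv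
          exact EqvGen.rel _ _ (Or.inl huv)
    · exact pair2

lemma cN_mul_swap_of_sameCycle (hab : a ≠ b) (h : σ.SameCycle a b) :
    cN (σ * swap a b) = cN σ + 1 := by
  have h1 : Nat.card (Quot (joinRel (fRel ⇑σ) a b)) = cN σ :=
    card_joinRel_of_rel (eqvGen_fRel_iff_sameCycle.2 h)
  have h2 : ¬ (σ * swap a b).SameCycle a b := (sameCycle_mul_swap_iff hab).1 h
  have h3 : Nat.card (Quot (joinRel (fRel ⇑(σ * swap a b)) a b)) + 1 = cN (σ * swap a b) :=
    card_joinRel_of_not_rel (fun hc => h2 (eqvGen_fRel_iff_sameCycle.1 hc))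
  have h4 := orbCount_congr (joinRel_eqvGen_mul_swap (σ := σ) hab)
  unfold cN at *
  omega

lemma cN_mul_swap_of_not_sameCycle (hab : a ≠ b) (h : ¬ σ.SameCycle a b) :
    cN (σ * swap a b) + 1 = cN σ := by
  have h1 : Nat.card (Quot (joinRel (fRel ⇑σ) a b)) + 1 = cN σ :=
    card_joinRel_of_not_rel (fun hc => h (eqvGen_fRel_iff_sameCycle.1 hc))
  have h2 : (σ * swap a b).SameCycle a b := not_not.1 ((sameCycle_mul_swap_iff hab).not.1 (by simpa using h))
  have h3 : Nat.card (Quot (joinRel (fRel ⇑(σ * swap a b)) a b)) = cN (σ * swap a b) :=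
    card_joinRel_of_rel (eqvGen_fRel_iff_sameCycle.2 h2)
  have h4 := orbCount_congr (joinRel_eqvGen_mul_swap (σ := σ) hab)
  unfold cN at *
  omega

/-- the relation generating the orbits of `⟨p, q⟩` -/
def kRel (p q : Perm α) : α → α → Prop := fun u v => p u = v ∨ q u = v

/-- the number of orbits of `⟨p, q⟩` -/
noncomputable def kN (p q : Perm α) : ℕ := Nat.card (Quot (kRel p q))

lemma sameCycle_mul_to_kRel (h : (p * q).SameCycle a b) : EqvGen (kRel p q) a b := by
  refine eqvGen_mono' ?_ (eqvGen_fRel_iff_sameCycle.2 h)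
  intro u v huv
  have hv : p (q u) = v := huv
  exact hv ▸ (EqvGen.rel u (q u) (Or.inr rfl)).trans _ _ _ (EqvGen.rel _ _ (Or.inl rfl))

lemma kN_le_cN_mul : kN p q ≤ cN (p * q) :=
  orbCount_le (fun u v huv => sameCycle_mul_to_kRel (eqvGen_fRel_iff_sameCycle.1 (EqvGen.rel _ _ huv)))

lemma joinRel_kRel_eqvGen_mul_swap (hab : a ≠ b) : ∀ u v,
    EqvGen (joinRel (kRel p q) a b) u v ↔ EqvGen (joinRel (kRel p (q * swap a b)) a b) u v := by
  have pair1 : EqvGen (joinRel (kRel p (q * swap a b)) a b) a b := eqvGen_joinRel_pair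
  have pair2 : EqvGen (joinRel (kRel p q) a b) a b := eqvGen_joinRel_pair
  intro u v
  constructor
  · apply eqvGen_mono'
    rintro u v ((huv | huv) | ⟨rfl, rfl⟩)
    · exact EqvGen.rel _ _ (Or.inl (Or.inl huv))
    · rcases eq_or_ne u a with rfl | hua
      · refine pair1.trans _ _ _ (EqvGen.rel _ _ (Or.inl (Or.inr ?_)))
        simp only [Perm.mul_apply, swap_apply_right]
        exact huv
      · rcases eq_or_ne u b with rfl | hub
        · refine (pair1.symm _ _).trans _ _ _ (EqvGen.rel _ _ (Or.inl (Or.inr ?_)))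
          simp only [Perm.mul_apply, swap_apply_left]
          exact huv
        · refine EqvGen.rel _ _ (Or.inl (Or.inr ?_))
          simp only [Perm.mul_apply, swap_apply_of_ne_of_ne hua hub]
          exact huv
    · exact pair1
  · apply eqvGen_mono'
    rintro u v ((huv | huv) | ⟨rfl, rfl⟩)
    · exact EqvGen.rel _ _ (Or.inl (Or.inl huv))
    · simp only [Perm.mul_apply] at huv
      rcases eq_or_ne u a with rfl | hua
      · rw [swap_apply_left] at huv
        exact pair2.trans _ _ _ (EqvGen.rel _ _ (Or.inl (Or.inr huv)))
      · rcases eq_or_ne u b with rfl | hub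
        · rw [swap_apply_right] at huv
          exact (pair2.symm _ _).trans _ _ _ (EqvGen.rel _ _ (Or.inl (Or.inr huv)))
        · rw [swap_apply_of_ne_of_ne hua hub] at huv
          exact EqvGen.rel _ _ (Or.inl (Or.inr huv))
    · exact pair2

lemma cN_le_card : cN q ≤ Fintype.card α := by
  rw [← Nat.card_eq_fintype_card]
  exact Nat.card_le_card_of_surjective (Quot.mk _) Quot.mk_surjective

lemma eq_one_of_cN_eq_card (h : cN q = Fintype.card α) : q = 1 := by
  have hbij : Function.Bijective (Quot.mk (fRel ⇑q)) := by
    rw [Nat.bijective_iff_surjective_and_card]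
    exact ⟨Quot.mk_surjective, by rw [Nat.card_eq_fintype_card]; exact h.symm ▸ rfl⟩
  ext x
  exact (hbij.1 (Quot.sound (rfl : fRel ⇑q x (q x)))).symm

lemma cN_one : cN (1 : Perm α) = Fintype.card α := by
  rw [← Nat.card_eq_fintype_card]
  refine (Nat.card_eq_of_bijective (Quot.mk _) ⟨fun u v huv => ?_, Quot.mk_surjective⟩).symm
  have := Quot.eq.1 huv
  clear huv
  induction this with
  | rel a b hab => exact hab
  | refl a => rfl
  | symm a b _ ih => exact ih.symm
  | trans a b c _ _ ih1 ih2 => exact ih1.trans ih2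

lemma kN_one_right : kN p (1 : Perm α) = cN p := by
  refine orbCount_congr fun u v => ⟨eqvGen_mono' ?_, eqvGen_mono' ?_⟩
  · rintro u v (huv | huv)
    · exact EqvGen.rel _ _ huv
    · exact huv ▸ EqvGen.refl u
  · intro u v huv
    exact EqvGen.rel _ _ (Or.inl huv)

/-- Master theorem: nonnegativity and integrality of the genus of a pair of
permutations. -/
theorem master (p : Perm α) : ∀ q : Perm α,
    ∃ g : ℕ, 2 * kN p q + Fintype.card α = cN p + cN q + cN (p * q) + 2 * g := by
  suffices H : ∀ μ (q : Perm α), Fintype.card α - cN q ≤ μ →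
      ∃ g : ℕ, 2 * kN p q + Fintype.card α = cN p + cN q + cN (p * q) + 2 * g by
    exact fun q => H _ q le_rfl
  intro μ
  induction μ with
  | zero =>
    intro q hq
    have h1 : cN q = Fintype.card α := le_antisymm cN_le_card (by omega)
    have hq1 : q = 1 := eq_one_of_cN_eq_card h1
    subst hq1
    refine ⟨0, ?_⟩
    rw [kN_one_right, mul_one, cN_one]
    ring
  | succ μ ih =>
    intro q hq
    by_cases hone : q = 1
    · subst hone
      refine ⟨0, ?_⟩
      rw [kN_one_right, mul_one, cN_one]
      ring
    · obtain ⟨a, ha⟩ : ∃ a, q a ≠ a := by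
        by_contra hcon
        push_neg at hcon
        exact hone (Equiv.ext hcon)
      obtain ⟨b, hb⟩ : ∃ b, b = q a := ⟨_, rfl⟩
      have hab : a ≠ b := fun h => ha (hb.symm.trans h.symm)
      obtain ⟨q', hq'def⟩ : ∃ q', q' = q * swap a b := ⟨_, rfl⟩
      have hscq : q.SameCycle a b := ⟨1, by simp [hb]⟩
      have hq'c : cN q' = cN q + 1 := by
        rw [hq'def]
        exact cN_mul_swap_of_sameCycle hab hscq
      have hle : cN q' ≤ Fintype.card α := cN_le_card
      obtain ⟨g', hg'⟩ := ih q' (by omega)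
      have hqq : q' * swap a b = q := by rw [hq'def, mul_assoc, swap_mul_self, mul_one]
      have hpq : p * q = (p * q') * swap a b := by rw [← hqq, mul_assoc]
      have hKrel : EqvGen (kRel p q) a b := EqvGen.rel _ _ (Or.inr hb.symm)
      have hJq : Nat.card (Quot (joinRel (kRel p q) a b)) = kN p q :=
        card_joinRel_of_rel hKrel
      have hJeq := orbCount_congr (joinRel_kRel_eqvGen_mul_swap (p := p) (q := q) hab)
      rw [← hq'def] at hJeq
      by_cases hc : (p * q').SameCycle a b
      · have hcc : cN (p * q) = cN (p * q') + 1 := by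
          rw [hpq]
          exact cN_mul_swap_of_sameCycle hab hc
        have hJq' : Nat.card (Quot (joinRel (kRel p q') a b)) = kN p q' :=
          card_joinRel_of_rel (sameCycle_mul_to_kRel hc)
        refine ⟨g', by omega⟩
      · have hcc : cN (p * q) + 1 = cN (p * q') := by
          rw [hpq]
          exact cN_mul_swap_of_not_sameCycle hab hc
        have hK'le : kN p q' ≤ Nat.card (Quot (joinRel (kRel p q') a b)) + 1 :=
          card_le_joinRel_add_one
        exact ⟨g' + (kN p q + 1) - kN p q', by omega⟩
end LemmaT



/-- The number of orbits, i.e. classes of the equivalence relation generated by `r`. -/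
noncomputable def orbCount {α : Type*} (r : α → α → Prop) : ℕ := Nat.card (Quot r)

variable {B : Type} [Fintype B] [DecidableEq B]

/-- The first-return map of a permutation `σ` of `B` to a subset `P ⊆ B`:
`b ↦ σ^m b` for the minimal `m ≥ 1` with `σ^m b ∈ P`. -/
def firstRet (σ : Equiv.Perm B) (P : Finset B) (b : ↥P) : ↥P :=
  have h : ∃ m, 0 < m ∧ (σ ^ m) (b : B) ∈ P :=
    ⟨orderOf σ, orderOf_pos σ, by rw [pow_orderOf_eq_one]; simpa using b.2⟩
  ⟨(σ ^ Nat.find h) (b : B), (Nat.find_spec h).2⟩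

/-- An oriented ribbon graph: a triple of permutations of a finite set `B` such that
`σ₁` is a fixed-point-free involution and `σ₀ ∘ σ₁ ∘ σ₂ = id`. -/
structure RibbonGraph (B : Type) [Fintype B] [DecidableEq B] where
  s0 : Equiv.Perm B
  s1 : Equiv.Perm B
  s2 : Equiv.Perm B
  invol : ∀ b, s1 (s1 b) = b
  fpf : ∀ b, s1 b ≠ b
  triple : ∀ b, s0 (s1 (s2 b)) = b

namespace RibbonGraph

variable (D : RibbonGraph B)

/-- `v(𝔻)`: the number of orbits of `σ₀`. -/
noncomputable def vN : ℕ := orbCount fun a b : B => D.s0 a = b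

/-- `e(𝔻)`: the number of orbits of `σ₁`. -/
noncomputable def eN : ℕ := orbCount fun a b : B => D.s1 a = b

/-- `f(𝔻)`: the number of orbits of `σ₂`. -/
noncomputable def fN : ℕ := orbCount fun a b : B => D.s2 a = b

/-- `k(𝔻)`: the number of orbits of the subgroup generated by `σ₀` and `σ₁`. -/
noncomputable def kN : ℕ := orbCount fun a b : B => D.s0 a = b ∨ D.s1 a = b

/-- The genus `g(𝔻) = (2k − v + e − f)/2`. -/
noncomputable def gN : ℕ := (2 * D.kN + D.eN - D.vN - D.fN) / 2

/-- `𝔻` is connected if the subgroup generated by `σ₀` and `σ₁` acts transitively on `B`. -/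
def Connected : Prop :=
  ∀ a b : B, ∃ g ∈ Subgroup.closure ({D.s0, D.s1} : Set (Equiv.Perm B)), g a = b

end RibbonGraph

/-- A ribbon graph together with the bookkeeping needed for spanning subgraphs,
deletions and contractions: an ambient vertex permutation `s0` and edge involution `s1`
on `B`, and the set `act` of active half-edges (which is `s1`-invariant, `s1` being a
fixed-point-free involution on it).  The σ₀-orbits of `B` disjoint from `act` are the
isolated vertices; each contributes one vertex, one face and one connected component. -/
structure RG (B : Type) [Fintype B] [DecidableEq B] where
  act : Finset B
  s0 : Equiv.Perm B
  s1 : Equiv.Perm B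
  invol : ∀ b, s1 (s1 b) = b
  fpf : ∀ b ∈ act, s1 b ≠ b
  closed : ∀ b ∈ act, s1 b ∈ act

/-- A plain ribbon graph, viewed with all of its half-edges active. -/
def RibbonGraph.toRG (D : RibbonGraph B) : RG B :=
  ⟨Finset.univ, D.s0, D.s1, D.invol, fun b _ => D.fpf b, fun _ _ => Finset.mem_univ _⟩

namespace RG

variable (G : RG B)

/-- The edge (σ₁-orbit) `{a, σ₁ a}` of a half-edge `a`. -/
def edgeOf (a : B) : Finset B := {a, G.s1 a}

/-- The edge set `E(𝔻)`: the set of orbits `{b, σ₁ b}` of `σ₁`. -/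
def edges : Finset (Finset B) := G.act.image G.edgeOf

/-- `e(𝔻)`: the number of edges. -/
def numE : ℕ := G.edges.card

/-- `v(𝔻)`: the number of vertices, i.e. of `σ₀`-orbits (first-return orbits on the
active part together with the isolated vertices). -/
noncomputable def numV : ℕ := orbCount fun a b : B => G.s0 a = b

/-- The number of isolated vertices: `σ₀`-orbits of `B` disjoint from the active part. -/
noncomputable def isolated : ℕ :=
  Nat.card {x : Quot (fun a b : B => G.s0 a = b) // ∀ a : B, Quot.mk _ a = x → a ∉ G.act}

/-- The vertex permutation: first-return map of `σ₀` to the active half-edges. -/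
def ret0 : ↥G.act → ↥G.act := firstRet G.s0 G.act

/-- The edge involution restricted to the active half-edges. -/
def ret1 : ↥G.act → ↥G.act := fun b => ⟨G.s1 b, G.closed b b.2⟩

/-- `f(𝔻)`: the number of faces, i.e. orbits of the face permutation σ₂ = (σ₀σ₁)⁻¹
(an isolated vertex contributes one face). -/
noncomputable def numF : ℕ :=
  orbCount (fun a b : ↥G.act => G.ret0 (G.ret1 a) = b) + G.isolated

/-- `k(𝔻)`: the number of connected components (an isolated vertex is a component). -/
noncomputable def numK : ℕ :=
  orbCount (fun a b : ↥G.act => G.ret0 a = b ∨ G.ret1 a = b) + G.isolated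

/-- The nullity `n(𝔻) = e(𝔻) − v(𝔻) + k(𝔻)`. -/
noncomputable def numN : ℕ := G.numE + G.numK - G.numV

/-- The genus `g(𝔻) = (2k(𝔻) − v(𝔻) + e(𝔻) − f(𝔻))/2`. -/
noncomputable def genus : ℕ := (2 * G.numK + G.numE - G.numV - G.numF) / 2

/-- The spanning subgraph `H_S` determined by a set `S` of edges: the active half-edges
are those of `B_S = ⋃_{e ∈ S} e`; the ambient permutations are unchanged. -/
def spanning (S : Finset (Finset B)) : RG B where
  act := G.act.filter fun b => b ∈ S.biUnion id ∧ G.s1 b ∈ S.biUnion id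
  s0 := G.s0
  s1 := G.s1
  invol := G.invol
  fpf := fun b hb => G.fpf b (Finset.mem_filter.1 hb).1
  closed := by
    intro b hb
    rw [Finset.mem_filter] at hb ⊢
    exact ⟨G.closed b hb.1, hb.2.2, by rw [G.invol]; exact hb.2.1⟩

/-- The deletion `𝔻 − e` of the edge `e = {a, σ₁ a}`: the spanning subgraph on the
remaining edges. -/
def del (a : B) : RG B where
  act := G.act \ {a, G.s1 a}
  s0 := G.s0
  s1 := G.s1
  invol := G.invol
  fpf := fun b hb => G.fpf b (Finset.mem_sdiff.1 hb).1
  closed := by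
    intro b hb
    rw [Finset.mem_sdiff, Finset.mem_insert, Finset.mem_singleton] at hb ⊢
    push_neg at hb ⊢
    exact ⟨G.closed b hb.1,
      fun h => absurd (by rw [← h, G.invol] : b = G.s1 a) hb.2.2,
      fun h => absurd (G.s1.injective h) hb.2.1⟩

/-- The contraction `𝔻/e` of the edge `e = {a, σ₁ a}`: the two half-edges of `e` become
inactive and the vertex permutation becomes `τ = σ₀ ∘ (a, σ₁ a)`. -/
def contr (a : B) : RG B where
  act := G.act \ {a, G.s1 a}
  s0 := G.s0 * Equiv.swap a (G.s1 a)
  s1 := G.s1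
  invol := G.invol
  fpf := fun b hb => G.fpf b (Finset.mem_sdiff.1 hb).1
  closed := by
    intro b hb
    rw [Finset.mem_sdiff, Finset.mem_insert, Finset.mem_singleton] at hb ⊢
    push_neg at hb ⊢
    exact ⟨G.closed b hb.1,
      fun h => absurd (by rw [← h, G.invol] : b = G.s1 a) hb.2.2,
      fun h => absurd (G.s1.injective h) hb.2.1⟩

/-- The edge `{a, σ₁ a}` is a loop if its two half-edges lie in the same `σ₀`-orbit. -/
def IsLoop (a : B) : Prop := G.s0.SameCycle a (G.s1 a)

/-- The edge `{a, σ₁ a}` is a bridge if deleting it increases the number of connected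
components by one. -/
noncomputable def IsBridge (a : B) : Prop := (G.del a).numK = G.numK + 1

/-- `δ = −A² − A⁻²`. -/
noncomputable def lDelta : LaurentPolynomial ℤ :=
  -LaurentPolynomial.T 2 - LaurentPolynomial.T (-2)

/-- The Kauffman bracket of a ribbon graph:
`⟨𝔻⟩ = Σ_{S ⊆ E(𝔻)} A^{e(𝔻) − 2|S|} δ^{f(H_S) − 1}`. -/
noncomputable def bracket : LaurentPolynomial ℤ :=
  ∑ S ∈ G.edges.powerset,
    LaurentPolynomial.T ((G.numE : ℤ) - 2 * S.card) * lDelta ^ ((G.spanning S).numF - 1)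

/-- The Bollobás–Riordan–Tutte polynomial (subgraph expansion), in variables
`X = X₀`, `Y = X₁`, `Z = X₂`:
`C(𝔻; X, Y, Z) = Σ_{S ⊆ E(𝔻)} (X−1)^{k(H_S) − k(𝔻)} Y^{n(H_S)} Z^{g(H_S)}`. -/
noncomputable def brt : MvPolynomial (Fin 3) ℤ :=
  ∑ S ∈ G.edges.powerset,
    (MvPolynomial.X 0 - 1) ^ ((G.spanning S).numK - G.numK) *
      MvPolynomial.X 1 ^ (G.spanning S).numN *
      MvPolynomial.X 2 ^ (G.spanning S).genus

/-- Two half-edges lie in the same connected component (where an inactive half-edge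
belongs to the isolated vertex given by its `σ₀`-orbit). -/
def sameComp (x y : B) : Prop :=
  Relation.EqvGen (fun u v => G.s0 u = v ∨ (u ∈ G.act ∧ G.s1 u = v)) x y

/-- `M(H_S) = e(𝔻) − 2|S| + 2 f(H_S) − 2`, the maximal power of `A` contributed by the
spanning subgraph `H_S` to the Kauffman bracket. -/
noncomputable def mVal (S : Finset (Finset B)) : ℤ :=
  (G.numE : ℤ) - 2 * S.card + 2 * (G.spanning S).numF - 2

/-- The spanning trees of `𝔻`: edge sets `T` with `k(H_T) = 1` and `n(H_T) = 0`. -/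
noncomputable def spanningTrees : Finset (Finset (Finset B)) :=
  G.edges.powerset.filter fun T => (G.spanning T).numK = 1 ∧ (G.spanning T).numN = 0

/-- The number `i(T)` of internally active edges of `T`: edges `t ∈ T` that are
`≺`-minimal in their cut `{e ∈ E(𝔻) : k(H_{(T∖{t})∪{e}}) = 1}`. -/
noncomputable def numIntActive [LinearOrder (Finset B)] (T : Finset (Finset B)) : ℕ :=
  (T.filter fun t =>
    ∀ e ∈ G.edges, (G.spanning (insert e (T.erase t))).numK = 1 → t ≤ e).card

/-- The set `𝓔(T)` of externally active edges of `T`: edges `e ∉ T` that are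
`≺`-minimal in `{f ∈ T ∪ {e} : k(H_{(T∪{e})∖{f}}) = 1}`. -/
noncomputable def extActives [LinearOrder (Finset B)] (T : Finset (Finset B)) :
    Finset (Finset B) :=
  G.edges.filter fun e => e ∉ T ∧
    ∀ f ∈ insert e T, (G.spanning ((insert e T).erase f)).numK = 1 → e ≤ f

end RG

namespace RG
variable {B : Type} [Fintype B] [DecidableEq B]

lemma firstRet_ex (σ : Perm B) (Pset : Finset B) (b : ↥Pset) :
    ∃ m, 0 < m ∧ (σ ^ m) (b : B) ∈ Pset :=
  ⟨orderOf σ, orderOf_pos σ, by rw [pow_orderOf_eq_one]; simpa using b.2⟩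

lemma firstRet_coe (σ : Perm B) (Pset : Finset B) (b : ↥Pset) :
    (firstRet σ Pset b : B) = (σ ^ Nat.find (firstRet_ex σ Pset b)) (b : B) := rfl

lemma firstRet_injective (σ : Perm B) (Pset : Finset B) :
    Function.Injective (firstRet σ Pset) := by
  intro x y hxy
  have hx := firstRet_ex σ Pset x
  have hy := firstRet_ex σ Pset y
  have hcoe : (σ ^ Nat.find hx) (x : B) = (σ ^ Nat.find hy) (y : B) := by
    rw [← firstRet_coe σ Pset x, ← firstRet_coe σ Pset y, hxy]
  rcases le_or_gt (Nat.find hx) (Nat.find hy) with hle | hlt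
  · have key : (σ ^ (Nat.find hy - Nat.find hx)) (y : B) = (x : B) := by
      apply Equiv.injective (σ ^ Nat.find hx)
      rw [← Perm.mul_apply, ← pow_add, Nat.add_sub_cancel' hle]
      exact hcoe.symm
    rcases Nat.eq_zero_or_pos (Nat.find hy - Nat.find hx) with h0 | hpos
    · rw [h0, pow_zero] at key
      exact Subtype.ext (by simpa using key.symm)
    · exfalso
      have hxpos : 0 < Nat.find hx := (Nat.find_spec hx).1
      exact Nat.find_min hy (m := Nat.find hy - Nat.find hx) (by omega) ⟨hpos, by rw [key]; exact x.2⟩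
  · have key : (σ ^ (Nat.find hx - Nat.find hy)) (x : B) = (y : B) := by
      apply Equiv.injective (σ ^ Nat.find hy)
      rw [← Perm.mul_apply, ← pow_add, Nat.add_sub_cancel' (le_of_lt hlt)]
      exact hcoe
    exfalso
    have hypos : 0 < Nat.find hy := (Nat.find_spec hy).1
    exact Nat.find_min hx (m := Nat.find hx - Nat.find hy) (by omega) ⟨by omega, by rw [key]; exact y.2⟩

variable (H : RG B)

/-- the vertex permutation of the active part -/
noncomputable def Pp : Perm ↥H.act :=
  Equiv.ofBijective (firstRet H.s0 H.act)
    (Finite.injective_iff_bijective.1 (firstRet_injective _ _))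

lemma ret1_invol : Function.Involutive H.ret1 := fun b => Subtype.ext (H.invol b)

/-- the edge permutation of the active part -/
def Qp : Perm ↥H.act := (ret1_invol H).toPerm

lemma coe_Pp : ⇑(Pp H) = H.ret0 := rfl
lemma coe_Qp : ⇑(Qp H) = H.ret1 := rfl

lemma numF_eq' : H.numF = cN (Pp H * Qp H) + H.isolated := rfl
lemma numK_eq' : H.numK = kN (Pp H) (Qp H) + H.isolated := rfl
end RG

namespace RG
section RGlemmas
set_option linter.unusedSectionVars false
variable {B : Type} [Fintype B] [DecidableEq B] (H : RG B)

lemma eqvGen_fRel_iterate {α : Type*} (f : α → α) (j : ℕ) (x : α) :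
    EqvGen (fRel f) x (f^[j] x) := by
  induction j with
  | zero => exact EqvGen.refl x
  | succ j ih =>
    rw [Function.iterate_succ_apply']
    exact ih.trans _ _ _ (EqvGen.rel _ _ rfl)

lemma ret0_iterate_absorb : ∀ k (x : ↥H.act) (hk : (H.s0 ^ k) (x : B) ∈ H.act),
    ∃ j, (H.ret0)^[j] x = ⟨(H.s0 ^ k) (x : B), hk⟩ := by
  intro k
  induction k using Nat.strong_induction_on with
  | _ k ih =>
    intro x hk
    rcases Nat.eq_zero_or_pos k with rfl | hkpos
    · exact ⟨0, Subtype.ext (by simp)⟩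
    · have hx := firstRet_ex H.s0 H.act x
      have hmle : Nat.find hx ≤ k := Nat.find_min' hx ⟨hkpos, hk⟩
      have hmpos : 0 < Nat.find hx := (Nat.find_spec hx).1
      have hsplit : (H.s0 ^ k) (x : B) = (H.s0 ^ (k - Nat.find hx)) ((H.ret0 x : B)) := by
        show (H.s0 ^ k) (x : B) = (H.s0 ^ (k - Nat.find hx)) ((H.s0 ^ Nat.find hx) (x : B))
        rw [← Perm.mul_apply, ← pow_add, Nat.sub_add_cancel hmle]
      have hk' : (H.s0 ^ (k - Nat.find hx)) ((H.ret0 x : B)) ∈ H.act := hsplit ▸ hk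
      obtain ⟨j, hj⟩ := ih (k - Nat.find hx) (by omega) (H.ret0 x) hk'
      refine ⟨j + 1, ?_⟩
      rw [Function.iterate_succ_apply, hj]
      exact Subtype.ext hsplit.symm

lemma numV_eq : H.numV = cN (Pp H) + H.isolated := by
  classical
  have wd : ∀ u v : ↥H.act, fRel H.ret0 u v →
      Quot.mk (fRel ⇑H.s0) (u : B) = Quot.mk (fRel ⇑H.s0) (v : B) := by
    intro u v huv
    have hv : (v : B) = (H.s0 ^ Nat.find (firstRet_ex H.s0 H.act u)) (u : B) := by
      rw [← huv]; rfl
    rw [Quot.eq, hv]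
    exact eqvGen_fRel_pow H.s0 _ _
  have hbij : Nat.card (Quot (fRel H.ret0)) =
      Nat.card {x : Quot (fRel ⇑H.s0) // ¬ ∀ a : B, Quot.mk _ a = x → a ∉ H.act} := by
    apply Nat.card_eq_of_bijective
      (Quot.lift (fun u : ↥H.act =>
        (⟨Quot.mk _ (u : B), fun hall => hall u rfl u.2⟩ :
          {x : Quot (fRel ⇑H.s0) // ¬ ∀ a : B, Quot.mk _ a = x → a ∉ H.act}))
        (fun u v huv => Subtype.ext (wd u v huv)))
    constructor
    · intro u v
      induction u using Quot.ind with | _ u =>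
      induction v using Quot.ind with | _ v =>
      intro huv
      have h1 : Quot.mk (fRel ⇑H.s0) (u : B) = Quot.mk (fRel ⇑H.s0) (v : B) :=
        Subtype.ext_iff.1 huv
      have h2 : H.s0.SameCycle (u : B) (v : B) :=
        eqvGen_fRel_iff_sameCycle.1 (Quot.eq.1 h1)
      obtain ⟨i, _, _, hi⟩ := Perm.SameCycle.exists_pow_eq H.s0 h2
      have hk : (H.s0 ^ i) (u : B) ∈ H.act := by rw [hi]; exact v.2
      obtain ⟨j, hj⟩ := ret0_iterate_absorb H i u hk
      have hjv : (H.ret0)^[j] u = v := by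
        rw [hj]; exact Subtype.ext hi
      rw [Quot.eq, ← hjv]
      exact eqvGen_fRel_iterate H.ret0 j u
    · rintro ⟨x, hx⟩
      push_neg at hx
      obtain ⟨a, hax, ha⟩ := hx
      exact ⟨Quot.mk _ ⟨a, ha⟩, Subtype.ext hax⟩
  have hsum : Nat.card (Quot (fRel ⇑H.s0)) =
      Nat.card {x : Quot (fRel ⇑H.s0) // ¬ ∀ a : B, Quot.mk _ a = x → a ∉ H.act} +
      Nat.card {x : Quot (fRel ⇑H.s0) // ∀ a : B, Quot.mk _ a = x → a ∉ H.act} := by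
    rw [← Nat.card_sum]
    apply Nat.card_congr
    exact ((Equiv.sumCompl _).symm.trans (Equiv.sumComm _ _))
  show Nat.card (Quot (fRel ⇑H.s0)) = Nat.card (Quot (fRel H.ret0)) + H.isolated
  rw [hsum, hbij]
  rfl

lemma one_le_quot_add_isolated [Nonempty B] (r : ↥H.act → ↥H.act → Prop) :
    1 ≤ Nat.card (Quot r) + H.isolated := by
  rcases Finset.eq_empty_or_nonempty H.act with he | ⟨a, ha⟩
  · have hne : Nonempty {x : Quot (fun a b : B => H.s0 a = b) //
        ∀ a : B, Quot.mk _ a = x → a ∉ H.act} :=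
      ⟨⟨Quot.mk _ (Classical.arbitrary B), fun a _ => by simp [he]⟩⟩
    have hpos : 0 < H.isolated := Nat.card_pos
    omega
  · have hne : Nonempty (Quot r) := ⟨Quot.mk r ⟨a, ha⟩⟩
    have hpos : 0 < Nat.card (Quot r) := Nat.card_pos
    omega

lemma numK_pos [Nonempty B] : 1 ≤ H.numK := one_le_quot_add_isolated H _
lemma numF_pos [Nonempty B] : 1 ≤ H.numF := one_le_quot_add_isolated H _

lemma edgeOf_s1 (a : B) : H.edgeOf (H.s1 a) = H.edgeOf a := by
  unfold edgeOf
  rw [H.invol]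
  exact Finset.pair_comm _ _

lemma edgeOf_eq_of_mem {a x : B} (hx : x ∈ H.edgeOf a) : H.edgeOf x = H.edgeOf a := by
  rcases Finset.mem_insert.1 hx with rfl | hx
  · rfl
  · rw [Finset.mem_singleton.1 hx, edgeOf_s1]

lemma numE_eq' : H.numE = cN (Qp H) := by
  symm
  have hcard : Nat.card (Quot (fRel H.ret1)) = Nat.card ↥H.edges := by
    apply Nat.card_eq_of_bijective
      (Quot.lift (fun u : ↥H.act => (⟨H.edgeOf u, Finset.mem_image_of_mem _ u.2⟩ : ↥H.edges))
        (fun u v huv => Subtype.ext (by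
          show H.edgeOf (u : B) = H.edgeOf (v : B)
          have hv : (v : B) = H.s1 (u : B) := by rw [← huv]; rfl
          rw [hv, edgeOf_s1])))
    constructor
    · intro u v
      induction u using Quot.ind with | _ u =>
      induction v using Quot.ind with | _ v =>
      intro huv
      have h1 : H.edgeOf (u : B) = H.edgeOf (v : B) := Subtype.ext_iff.1 huv
      have h2 : (v : B) ∈ H.edgeOf (u : B) := h1 ▸ Finset.mem_insert_self _ _
      rcases Finset.mem_insert.1 h2 with hv | hv
      · exact congrArg _ (Subtype.ext hv.symm)
      · exact Quot.sound (Subtype.ext (Finset.mem_singleton.1 hv).symm)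
    · rintro ⟨e, he⟩
      obtain ⟨a, ha, hae⟩ := Finset.mem_image.1 he
      exact ⟨Quot.mk _ ⟨a, ha⟩, Subtype.ext hae⟩
  show Nat.card (Quot (fRel H.ret1)) = H.numE
  rw [hcard, Nat.card_eq_finsetCard]
  rfl

lemma card_act_eq : Fintype.card ↥H.act = 2 * H.numE := by
  rw [Fintype.card_coe, Finset.card_eq_sum_card_image H.edgeOf H.act]
  have hfib : ∀ e ∈ H.act.image H.edgeOf,
      (H.act.filter (fun x => H.edgeOf x = e)).card = 2 := by
    intro e he
    obtain ⟨a, ha, rfl⟩ := Finset.mem_image.1 he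
    have hset : H.act.filter (fun x => H.edgeOf x = H.edgeOf a) = {a, H.s1 a} := by
      ext x
      simp only [Finset.mem_filter, Finset.mem_insert, Finset.mem_singleton]
      constructor
      · rintro ⟨hx, hex⟩
        have : x ∈ H.edgeOf a := hex ▸ Finset.mem_insert_self _ _
        rcases Finset.mem_insert.1 this with h | h
        · exact Or.inl h
        · exact Or.inr (Finset.mem_singleton.1 h)
      · rintro (rfl | rfl)
        · exact ⟨ha, rfl⟩
        · exact ⟨H.closed a ha, edgeOf_s1 H a⟩
    rw [hset]
    exact Finset.card_pair (Ne.symm (H.fpf a ha))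
  rw [Finset.sum_congr rfl hfib, Finset.sum_const, smul_eq_mul, mul_comm]
  rfl

lemma euler [Nonempty B] :
    ∃ g : ℕ, 2 * H.numK + H.numE = H.numV + H.numF + 2 * g ∧ H.numV ≤ H.numE + H.numK := by
  obtain ⟨g, hg⟩ := master (Pp H) (Qp H)
  have h4 : kN (Pp H) (Qp H) ≤ cN (Pp H * Qp H) := kN_le_cN_mul
  have h2 := numE_eq' H
  have h3 := card_act_eq H
  rw [numF_eq', numK_eq', numV_eq]
  exact ⟨g, by omega, by omega⟩

end RGlemmas
end RG

namespace RG
section RGlemmas2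
set_option linter.unusedSectionVars false
variable {B : Type} [Fintype B] [DecidableEq B] (G : RG B)

lemma spanning_edges {S : Finset (Finset B)} (hS : S ⊆ G.edges) : (G.spanning S).edges = S := by
  have hEq : (G.spanning S).edgeOf = G.edgeOf := rfl
  ext e
  constructor
  · intro he
    obtain ⟨x, hx, rfl⟩ := Finset.mem_image.1 he
    have hx' := Finset.mem_filter.1 hx
    obtain ⟨f, hfS, hxf⟩ := Finset.mem_biUnion.1 hx'.2.1
    obtain ⟨y, hy, rfl⟩ := Finset.mem_image.1 (hS hfS)
    have hxy : G.edgeOf x = G.edgeOf y := edgeOf_eq_of_mem G hxf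
    rw [hEq, hxy]
    exact hfS
  · intro he
    obtain ⟨y, hy, hey⟩ := Finset.mem_image.1 (hS he)
    apply Finset.mem_image.2
    refine ⟨y, Finset.mem_filter.2 ⟨hy, ?_, ?_⟩, by rw [hEq]; exact hey⟩
    · exact Finset.mem_biUnion.2 ⟨e, he, by rw [← hey]; exact Finset.mem_insert_self _ _⟩
    · exact Finset.mem_biUnion.2 ⟨e, he, by
        rw [← hey]
        exact Finset.mem_insert_of_mem (Finset.mem_singleton_self _)⟩

lemma spanning_numE {S : Finset (Finset B)} (hS : S ⊆ G.edges) :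
    (G.spanning S).numE = S.card := by
  unfold numE
  rw [spanning_edges G hS]

lemma firstRet_univ (σ : Perm B) (u : ↥(Finset.univ : Finset B)) :
    firstRet σ Finset.univ u = ⟨σ (u : B), Finset.mem_univ _⟩ := by
  apply Subtype.ext
  rw [firstRet_coe]
  have h1 : Nat.find (firstRet_ex σ Finset.univ u) = 1 :=
    le_antisymm (Nat.find_min' _ ⟨one_pos, Finset.mem_univ _⟩)
      (Nat.find_spec (firstRet_ex σ Finset.univ u)).1
  rw [h1, pow_one]

end RGlemmas2
end RG

section ConnectedLemma
variable {B : Type} [Fintype B] [DecidableEq B]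

lemma toRG_numK_eq_one [Nonempty B] (D : RibbonGraph B) (hc : D.Connected) :
    D.toRG.numK = 1 := by
  classical
  have hiso : D.toRG.isolated = 0 := by
    have : IsEmpty {x : Quot (fun a b : B => D.toRG.s0 a = b) //
        ∀ a : B, Quot.mk _ a = x → a ∉ D.toRG.act} := by
      constructor
      rintro ⟨x, hx⟩
      obtain ⟨a, rfl⟩ := Quot.exists_rep x
      exact hx a rfl (Finset.mem_univ a)
    exact Nat.card_of_isEmpty
  have hone : Nat.card (Quot (fun a b : ↥D.toRG.act =>
      D.toRG.ret0 a = b ∨ D.toRG.ret1 a = b)) = 1 := by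
    rw [Nat.card_eq_one_iff_unique]
    constructor
    · constructor
      intro u v
      induction u using Quot.ind with | _ u =>
      induction v using Quot.ind with | _ v =>
      obtain ⟨g, hg, hgu⟩ := hc (u : B) (v : B)
      rw [Quot.eq]
      have key : ∀ (g : Perm B), g ∈ Subgroup.closure ({D.s0, D.s1} : Set (Perm B)) →
          ∀ x : ↥D.toRG.act, EqvGen (fun a b : ↥D.toRG.act =>
            D.toRG.ret0 a = b ∨ D.toRG.ret1 a = b) x ⟨g (x : B), Finset.mem_univ _⟩ := by
        intro g hg
        induction hg using Subgroup.closure_induction with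
        | mem w hw =>
          intro x
          rcases hw with rfl | rfl
          · refine EqvGen.rel _ _ (Or.inl ?_)
            exact RG.firstRet_univ D.s0 x
          · exact EqvGen.rel _ _ (Or.inr rfl)
        | one =>
          intro x
          have : (⟨(1 : Perm B) (x : B), Finset.mem_univ _⟩ : ↥D.toRG.act) = x :=
            Subtype.ext rfl
          rw [this]
          exact EqvGen.refl x
        | mul w z hw hz ihw ihz =>
          intro x
          have h1 := ihz x
          have h2 := ihw (⟨z (x : B), Finset.mem_univ _⟩ : ↥D.toRG.act)
          exact h1.trans _ _ _ h2
        | inv w hw ihw =>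
          intro x
          have h1 := ihw (⟨w⁻¹ (x : B), Finset.mem_univ _⟩ : ↥D.toRG.act)
          have h2 : (⟨w ((w⁻¹ (x : B))), Finset.mem_univ _⟩ : ↥D.toRG.act) = x :=
            Subtype.ext (by simp)
          rw [h2] at h1
          exact h1.symm _ _
      have hx := key g hg u
      have : (⟨g (u : B), Finset.mem_univ _⟩ : ↥D.toRG.act) = v := Subtype.ext hgu
      rw [this] at hx
      exact hx
    · exact ⟨Quot.mk _ ⟨Classical.arbitrary B, Finset.mem_univ _⟩⟩
  show Nat.card (Quot (fun a b : ↥D.toRG.act =>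
      D.toRG.ret0 a = b ∨ D.toRG.ret1 a = b)) + D.toRG.isolated = 1
  rw [hiso, hone]
end ConnectedLemma

section LaurentFacts
open LaurentPolynomial

lemma lDelta_ne_zero : RG.lDelta ≠ 0 := by
  intro h
  have h2 : (RG.lDelta : LaurentPolynomial ℤ).coeff 2 = (0 : LaurentPolynomial ℤ).coeff 2 := by rw [h]
  unfold RG.lDelta at h2
  rw [AddMonoidAlgebra.coeff_sub, AddMonoidAlgebra.coeff_neg, Finsupp.sub_apply, Finsupp.neg_apply] at h2
  simp [LaurentPolynomial.T_apply] at h2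

lemma T2_mul_lDelta : (LaurentPolynomial.T 2 : LaurentPolynomial ℤ) * RG.lDelta =
    -LaurentPolynomial.T 4 - 1 := by
  unfold RG.lDelta
  rw [mul_sub, mul_neg, ← LaurentPolynomial.T_add, ← LaurentPolynomial.T_add]
  norm_num [LaurentPolynomial.T_zero]
end LaurentFacts

/-- For a connected ribbon graph (the all-A ribbon graph of a connected link
projection), in the field of fractions of `ℤ[A, A⁻¹]`:
`A^{−e(𝔻)} ⟨𝔻⟩ = A^{2−2v(𝔻)} C(𝔻; −A⁴, A⁻²δ, δ⁻²)`, where `δ = −A² − A⁻²`. -/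
theorem bracket_eq_brt_specialization [Nonempty B] (D : RibbonGraph B) (hc : D.Connected) :
    algebraMap (LaurentPolynomial ℤ) (FractionRing (LaurentPolynomial ℤ))
        (LaurentPolynomial.T (-(D.toRG.numE : ℤ)) * D.toRG.bracket) =
      algebraMap (LaurentPolynomial ℤ) (FractionRing (LaurentPolynomial ℤ))
          (LaurentPolynomial.T (2 - 2 * (D.toRG.numV : ℤ))) *
        MvPolynomial.aeval
          ![-(algebraMap (LaurentPolynomial ℤ) (FractionRing (LaurentPolynomial ℤ))
                (LaurentPolynomial.T 4)),
            algebraMap (LaurentPolynomial ℤ) (FractionRing (LaurentPolynomial ℤ))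
              (LaurentPolynomial.T (-2) * RG.lDelta),
            ((algebraMap (LaurentPolynomial ℤ) (FractionRing (LaurentPolynomial ℤ))
                RG.lDelta)⁻¹) ^ 2]
          D.toRG.brt := by
  
  classical
  have hK1 : D.toRG.numK = 1 := toRG_numK_eq_one D hc
  set φ := algebraMap (LaurentPolynomial ℤ) (FractionRing (LaurentPolynomial ℤ)) with hφ
  have hδ0 : φ RG.lDelta ≠ 0 := fun h =>
    lDelta_ne_zero ((map_eq_zero_iff φ (IsFractionRing.injective _ _)).1 h)
  unfold RG.bracket RG.brt
  rw [map_mul, map_sum, Finset.mul_sum, map_sum, Finset.mul_sum]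
  apply Finset.sum_congr rfl
  intro S hS
  have hSsub : S ⊆ D.toRG.edges := Finset.mem_powerset.1 hS
  obtain ⟨g0, hEuler, hVle⟩ := RG.euler (D.toRG.spanning S)
  have hE : (D.toRG.spanning S).numE = S.card := RG.spanning_numE D.toRG hSsub
  have hV : (D.toRG.spanning S).numV = D.toRG.numV := rfl
  have hk1 : 1 ≤ (D.toRG.spanning S).numK := RG.numK_pos _
  have hf1 : 1 ≤ (D.toRG.spanning S).numF := RG.numF_pos _
  rw [hE, hV] at hEuler hVle
  have hg : (D.toRG.spanning S).genus = g0 := by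
    unfold RG.genus
    rw [hE, hV]
    omega
  have hn : (D.toRG.spanning S).numN + D.toRG.numV =
      S.card + (D.toRG.spanning S).numK := by
    unfold RG.numN
    rw [hE, hV]
    omega
  have e1 : ((D.toRG.spanning S).numF - 1) + 2 * g0 =
      ((D.toRG.spanning S).numK - 1) + (D.toRG.spanning S).numN := by omega
  have e2 : (2 - 2 * (D.toRG.numV : ℤ)) + (((D.toRG.spanning S).numK - 1 : ℕ) : ℤ) * 2 +
      ((D.toRG.spanning S).numN : ℤ) * (-2) =
      -(D.toRG.numE : ℤ) + ((D.toRG.numE : ℤ) - 2 * S.card) := by omega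
  -- the identity inside the Laurent polynomial ring
  have c1 : RG.lDelta ^ ((D.toRG.spanning S).numF - 1) * RG.lDelta ^ (2 * g0)
      = RG.lDelta ^ ((D.toRG.spanning S).numK - 1) * RG.lDelta ^ (D.toRG.spanning S).numN := by
    rw [← pow_add, ← pow_add, e1]
  have c2 : (LaurentPolynomial.T (-(D.toRG.numE : ℤ)) : LaurentPolynomial ℤ) *
        LaurentPolynomial.T ((D.toRG.numE : ℤ) - 2 * S.card)
      = (LaurentPolynomial.T (2 - 2 * (D.toRG.numV : ℤ)) *
          LaurentPolynomial.T ((((D.toRG.spanning S).numK - 1 : ℕ) : ℤ) * 2)) *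
          LaurentPolynomial.T (((D.toRG.spanning S).numN : ℤ) * (-2)) := by
    rw [← LaurentPolynomial.T_add, ← LaurentPolynomial.T_add, ← LaurentPolynomial.T_add]
    exact (congrArg _ e2).symm
  have hL : (LaurentPolynomial.T (-(D.toRG.numE : ℤ)) *
        (LaurentPolynomial.T ((D.toRG.numE : ℤ) - 2 * S.card) *
          RG.lDelta ^ ((D.toRG.spanning S).numF - 1))) * RG.lDelta ^ (2 * g0)
      = LaurentPolynomial.T (2 - 2 * (D.toRG.numV : ℤ)) *
        ((LaurentPolynomial.T 2 * RG.lDelta) ^ ((D.toRG.spanning S).numK - 1) *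
          (LaurentPolynomial.T (-2) * RG.lDelta) ^ (D.toRG.spanning S).numN) := by
    rw [mul_pow, mul_pow, LaurentPolynomial.T_pow, LaurentPolynomial.T_pow]
    linear_combination (RG.lDelta ^ ((D.toRG.spanning S).numF - 1) * RG.lDelta ^ (2 * g0)) * c2 +
      ((LaurentPolynomial.T (2 - 2 * (D.toRG.numV : ℤ)) *
          LaurentPolynomial.T ((((D.toRG.spanning S).numK - 1 : ℕ) : ℤ) * 2)) *
          LaurentPolynomial.T (((D.toRG.spanning S).numN : ℤ) * (-2))) * c1
  -- now transfer to the fraction field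
  rw [hg, hK1]
  simp only [map_mul, map_pow, map_sub, map_one, MvPolynomial.aeval_X,
    Matrix.cons_val_zero, Matrix.cons_val_one, Matrix.head_cons, Matrix.cons_val_two,
    Matrix.tail_cons]
  have hA : -(φ (LaurentPolynomial.T 4)) - 1 = φ (LaurentPolynomial.T 2) * φ RG.lDelta := by
    rw [← map_mul, T2_mul_lDelta, map_sub, map_neg, map_one]
  rw [hA]
  have hInv : ((φ RG.lDelta)⁻¹ ^ 2) ^ g0 = (φ RG.lDelta ^ (2 * g0))⁻¹ := by
    rw [← inv_pow, ← pow_mul, inv_pow]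
  rw [hInv]
  rw [show φ (LaurentPolynomial.T (2 - 2 * (D.toRG.numV : ℤ))) *
        ((φ (LaurentPolynomial.T 2) * φ RG.lDelta) ^ ((D.toRG.spanning S).numK - 1) *
          (φ (LaurentPolynomial.T (-2)) * φ RG.lDelta) ^ (D.toRG.spanning S).numN *
          (φ RG.lDelta ^ (2 * g0))⁻¹)
      = (φ (LaurentPolynomial.T (2 - 2 * (D.toRG.numV : ℤ))) *
          ((φ (LaurentPolynomial.T 2) * φ RG.lDelta) ^ ((D.toRG.spanning S).numK - 1) *
            (φ (LaurentPolynomial.T (-2)) * φ RG.lDelta) ^ (D.toRG.spanning S).numN)) /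
          (φ RG.lDelta ^ (2 * g0)) from by rw [div_eq_mul_inv]; ring]
  rw [eq_div_iff (pow_ne_zero _ hδ0)]
  calc φ (LaurentPolynomial.T (-(D.toRG.numE : ℤ))) *
        (φ (LaurentPolynomial.T ((D.toRG.numE : ℤ) - 2 * S.card)) *
          φ RG.lDelta ^ ((D.toRG.spanning S).numF - 1)) * φ RG.lDelta ^ (2 * g0)
      = φ ((LaurentPolynomial.T (-(D.toRG.numE : ℤ)) *
          (LaurentPolynomial.T ((D.toRG.numE : ℤ) - 2 * S.card) *
            RG.lDelta ^ ((D.toRG.spanning S).numF - 1))) * RG.lDelta ^ (2 * g0)) := by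
        simp only [map_mul, map_pow]
    _ = φ (LaurentPolynomial.T (2 - 2 * (D.toRG.numV : ℤ)) *
          ((LaurentPolynomial.T 2 * RG.lDelta) ^ ((D.toRG.spanning S).numK - 1) *
            (LaurentPolynomial.T (-2) * RG.lDelta) ^ (D.toRG.spanning S).numN)) := by
        rw [hL]
    _ = φ (LaurentPolynomial.T (2 - 2 * (D.toRG.numV : ℤ))) *
          ((φ (LaurentPolynomial.T 2) * φ RG.lDelta) ^ ((D.toRG.spanning S).numK - 1) *
            (φ (LaurentPolynomial.T (-2)) * φ RG.lDelta) ^ (D.toRG.spanning S).numN) := by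
        simp only [map_mul, map_pow]
end

section
/- Let 𝔻 be an oriented ribbon graph and let e ∈ E(𝔻) be a bridge. Then ⟨𝔻⟩ = −A³ · ⟨𝔻/e⟩ in ℤ[A, A⁻¹]. (This is the combinatorial form of the behavior of the Kauffman bracket at a nugatory crossing.) -/
open Equiv Finset

variable {B : Type} [Fintype B] [DecidableEq B]

section Helpers

variable {α : Type*}

lemma eqvGen_of_step {r r' : α → α → Prop} (h : ∀ x y, r x y → Relation.EqvGen r' x y) :
    ∀ {x y}, Relation.EqvGen r x y → Relation.EqvGen r' x y := by
  intro x y hxy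
  induction hxy with
  | rel x y hr => exact h x y hr
  | refl x => exact Relation.EqvGen.refl x
  | symm x y _ ih => exact Relation.EqvGen.symm _ _ ih
  | trans x y z _ _ ih1 ih2 => exact Relation.EqvGen.trans _ _ _ ih1 ih2

/-- If two relations generate the same equivalence, their `Quot`s are equivalent. -/
noncomputable def quotEquivOfEqvGen {r r' : α → α → Prop}
    (h : ∀ x y, r x y → Relation.EqvGen r' x y)
    (h' : ∀ x y, r' x y → Relation.EqvGen r x y) : Quot r ≃ Quot r' where
  toFun := Quot.lift (Quot.mk r') (fun x y hr => Quot.eqvGen_sound (h x y hr))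
  invFun := Quot.lift (Quot.mk r) (fun x y hr => Quot.eqvGen_sound (h' x y hr))
  left_inv := by intro q; induction q using Quot.ind; rfl
  right_inv := by intro q; induction q using Quot.ind; rfl

lemma finite_quot [Finite α] (r : α → α → Prop) : Finite (Quot r) :=
  Finite.of_surjective (Quot.mk r) Quot.mk_surjective

/-- Counting lemma: if `r'` is obtained from `r` by merging the (distinct) classes of
`a` and `b`, then `r` has one more class. -/
lemma count_merge [Finite α] (r r' : α → α → Prop) (a b : α)
    (C1 : ∀ z w, r z w → Relation.EqvGen r' z w)
    (C2 : ∀ z w, r' z w → Relation.EqvGen r z w ∨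
      (Relation.EqvGen r z a ∧ Relation.EqvGen r w b) ∨
      (Relation.EqvGen r z b ∧ Relation.EqvGen r w a))
    (C3 : ¬ Relation.EqvGen r a b)
    (C4 : Relation.EqvGen r' a b) :
    Nat.card (Quot r) = Nat.card (Quot r') + 1 := by
  classical
  have hF : ∀ x y, r x y →
      (if Relation.EqvGen r x b then (Sum.inr Unit.unit : Quot r' ⊕ Unit)
        else Sum.inl (Quot.mk r' x)) =
      (if Relation.EqvGen r y b then (Sum.inr Unit.unit : Quot r' ⊕ Unit)
        else Sum.inl (Quot.mk r' y)) := by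
    intro x y hxy
    have hstep : Relation.EqvGen r x y := Relation.EqvGen.rel _ _ hxy
    by_cases h : Relation.EqvGen r x b
    · rw [if_pos h,
        if_pos (Relation.EqvGen.trans _ _ _ (Relation.EqvGen.symm _ _ hstep) h)]
    · rw [if_neg h, if_neg (fun h' => h (Relation.EqvGen.trans _ _ _ hstep h'))]
      exact congrArg Sum.inl (Quot.eqvGen_sound (C1 x y hxy))
  have hG : ∀ x y, r' x y →
      (if Relation.EqvGen r x b then Quot.mk r a else Quot.mk r x) =
      (if Relation.EqvGen r y b then Quot.mk r a else Quot.mk r y) := by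
    intro x y hxy
    rcases C2 x y hxy with h | ⟨hxa, hyb⟩ | ⟨hxb, hya⟩
    · by_cases hx : Relation.EqvGen r x b
      · rw [if_pos hx, if_pos (Relation.EqvGen.trans _ _ _ (Relation.EqvGen.symm _ _ h) hx)]
      · rw [if_neg hx, if_neg (fun h' => hx (Relation.EqvGen.trans _ _ _ h h'))]
        exact Quot.eqvGen_sound h
    · have hx : ¬ Relation.EqvGen r x b :=
        fun h' => C3 (Relation.EqvGen.trans _ _ _ (Relation.EqvGen.symm _ _ hxa) h')
      rw [if_neg hx, if_pos hyb]
      exact Quot.eqvGen_sound hxa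
    · have hy : ¬ Relation.EqvGen r y b :=
        fun h' => C3 (Relation.EqvGen.trans _ _ _ (Relation.EqvGen.symm _ _ hya) h')
      rw [if_pos hxb, if_neg hy]
      exact (Quot.eqvGen_sound hya).symm
  have e : Quot r ≃ (Quot r' ⊕ Unit) :=
    { toFun := Quot.lift (fun x => if Relation.EqvGen r x b then
        (Sum.inr Unit.unit : Quot r' ⊕ Unit) else Sum.inl (Quot.mk r' x)) hF
      invFun := Sum.elim
        (Quot.lift (fun x => if Relation.EqvGen r x b then Quot.mk r a else Quot.mk r x) hG)
        (fun _ => Quot.mk r b)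
      left_inv := by
        intro q
        induction q using Quot.ind with
        | _ x =>
          by_cases h : Relation.EqvGen r x b
          · show Sum.elim _ _ (if _ then _ else _) = _
            rw [if_pos h]
            exact Quot.eqvGen_sound (Relation.EqvGen.symm _ _ h)
          · show Sum.elim _ _ (if _ then _ else _) = _
            rw [if_neg h]
            show (if _ then _ else _) = _
            rw [if_neg h]
      right_inv := by
        intro q
        rcases q with q | u
        · induction q using Quot.ind with
          | _ x =>
            by_cases h : Relation.EqvGen r x b
            · show Quot.lift _ _ (if _ then _ else _) = _
              rw [if_pos h]
              show (if _ then _ else _) = _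
              rw [if_neg C3]
              refine congrArg Sum.inl (Quot.eqvGen_sound ?_)
              exact Relation.EqvGen.trans _ _ _ C4
                (Relation.EqvGen.symm _ _ (eqvGen_of_step C1 h))
            · show Quot.lift _ _ (if _ then _ else _) = _
              rw [if_neg h]
              show (if _ then _ else _) = _
              rw [if_neg h]
        · cases u
          show (if Relation.EqvGen r b b then (Sum.inr Unit.unit : Quot r' ⊕ Unit)
            else Sum.inl (Quot.mk r' b)) = Sum.inr Unit.unit
          rw [if_pos (Relation.EqvGen.refl b)]
      }
  have : Finite (Quot r') := finite_quot r'
  rw [Nat.card_congr e, Nat.card_sum]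
  simp

lemma eqvGen_iterate {α : Type*} (π : Equiv.Perm α) (n : ℕ) (x : α) :
    Relation.EqvGen (fun u v => π u = v) x ((π ^ n) x) := by
  induction n with
  | zero => exact Relation.EqvGen.refl x
  | succ n ih =>
    have h : (π ^ (n+1)) x = π ((π ^ n) x) := by rw [pow_succ']; rfl
    rw [h]
    exact Relation.EqvGen.trans _ _ _ ih (Relation.EqvGen.rel _ _ rfl)

lemma exists_pow_apply_eq {α : Type*} [Finite α] (π : Equiv.Perm α) (u : α) :
    (π ^ (orderOf π - 1)) (π u) = u := by
  have h1 : 0 < orderOf π := orderOf_pos π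
  have h : (π ^ (orderOf π - 1)) (π u) = (π ^ (orderOf π - 1) * π) u := rfl
  rw [h, ← pow_succ, Nat.sub_add_cancel h1, pow_orderOf_eq_one]
  rfl

/-- Multiplying by a transposition of elements in different cycles merges two classes. -/
lemma count_swap {B : Type} [Fintype B] [DecidableEq B] (θ : Equiv.Perm B) (a b : B)
    (hab : a ≠ b) (h : ¬ Relation.EqvGen (fun u v => θ u = v) a b) :
    Nat.card (Quot fun u v : B => θ u = v) =
    Nat.card (Quot fun u v : B => (θ * Equiv.swap a b) u = v) + 1 := by
  set θ' := θ * Equiv.swap a b with hθ'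
  have hθ'app : ∀ x, x ≠ a → x ≠ b → θ' x = θ x := by
    intro x hxa hxb
    simp [hθ', Equiv.swap_apply_of_ne_of_ne hxa hxb]
  have hθ'a : θ' a = θ b := by simp [hθ']
  have hθ'b : θ' b = θ a := by simp [hθ']
  have reach : ∀ n x, (θ ^ n) x = b → ¬ Relation.EqvGen (fun u v => θ u = v) x a →
      Relation.EqvGen (fun u v => θ' u = v) x b := by
    intro n
    induction n with
    | zero =>
      intro x hx _
      rw [pow_zero] at hx
      rw [show x = b from hx]
      exact Relation.EqvGen.refl b
    | succ n ih =>
      intro x hx hxa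
      by_cases hxb : x = b
      · rw [hxb]; exact Relation.EqvGen.refl b
      by_cases hxa' : x = a
      · rw [hxa'] at hxa
        exact absurd (Relation.EqvGen.refl a) hxa
      have hstep : Relation.EqvGen (fun u v => θ' u = v) x (θ x) :=
        Relation.EqvGen.rel _ _ (hθ'app x hxa' hxb)
      have hx' : (θ ^ n) (θ x) = b := by
        rw [show (θ ^ n) (θ x) = (θ ^ (n+1)) x from by rw [pow_succ]; rfl]; exact hx
      have hstep2 : Relation.EqvGen (fun u v => θ u = v) x (θ x) :=
        Relation.EqvGen.rel _ _ rfl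
      have hxa2 : ¬ Relation.EqvGen (fun u v => θ u = v) (θ x) a := by
        intro hc
        exact hxa (Relation.EqvGen.trans _ _ _ hstep2 hc)
      exact Relation.EqvGen.trans _ _ _ hstep (ih (θ x) hx' hxa2)
  have C4 : Relation.EqvGen (fun u v => θ' u = v) a b := by
    have h1 : (θ ^ (orderOf θ - 1)) (θ b) = b := exists_pow_apply_eq θ b
    have hb : Relation.EqvGen (fun u v => θ u = v) b (θ b) := Relation.EqvGen.rel _ _ rfl
    have h2 : ¬ Relation.EqvGen (fun u v => θ u = v) (θ b) a := by
      intro hc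
      exact h (Relation.EqvGen.symm _ _ (Relation.EqvGen.trans _ _ _ hb hc))
    have h3 := reach _ (θ b) h1 h2
    exact Relation.EqvGen.trans _ _ _ (Relation.EqvGen.rel a (θ b) hθ'a) h3
  refine count_merge _ _ a b ?_ ?_ h C4
  · intro z w hzw
    by_cases hza : z = a
    · rw [hza] at hzw ⊢
      rw [← hzw, ← hθ'b]
      exact Relation.EqvGen.trans _ _ _ C4 (Relation.EqvGen.rel _ _ rfl)
    by_cases hzb : z = b
    · rw [hzb] at hzw ⊢
      rw [← hzw, ← hθ'a]
      exact Relation.EqvGen.trans _ _ _ (Relation.EqvGen.symm _ _ C4)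
        (Relation.EqvGen.rel _ _ rfl)
    · exact Relation.EqvGen.rel _ _ (by rw [hθ'app z hza hzb]; exact hzw)
  · intro z w hzw
    by_cases hza : z = a
    · rw [hza] at hzw ⊢
      refine Or.inr (Or.inl ⟨Relation.EqvGen.refl a, ?_⟩)
      rw [← hzw, hθ'a]
      exact Relation.EqvGen.symm _ _ (Relation.EqvGen.rel b (θ b) rfl)
    by_cases hzb : z = b
    · rw [hzb] at hzw ⊢
      refine Or.inr (Or.inr ⟨Relation.EqvGen.refl b, ?_⟩)
      rw [← hzw, hθ'b]
      exact Relation.EqvGen.symm _ _ (Relation.EqvGen.rel a (θ a) rfl)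
    · exact Or.inl (Relation.EqvGen.rel _ _ (by rw [← hθ'app z hza hzb]; exact hzw))

end Helpers
section FirstRet

variable {B : Type} [Fintype B] [DecidableEq B]

lemma fr_spec (σ : Equiv.Perm B) (P : Finset B) (x : ↥P) :
    ∃ m, 0 < m ∧ ((σ ^ m) (x : B) ∈ P) ∧ ((firstRet σ P x : B) = (σ ^ m) (x : B)) ∧
      ∀ j, 0 < j → j < m → (σ ^ j) (x : B) ∉ P := by
  have h : ∃ m, 0 < m ∧ (σ ^ m) (x : B) ∈ P :=
    ⟨orderOf σ, orderOf_pos σ, by rw [pow_orderOf_eq_one]; simpa using x.2⟩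
  refine ⟨Nat.find h, (Nat.find_spec h).1, (Nat.find_spec h).2, rfl, ?_⟩
  intro j hj hjm hP
  exact Nat.find_min h hjm ⟨hj, hP⟩

lemma fr_char (σ : Equiv.Perm B) (P : Finset B) (x : ↥P) (m : ℕ) (hm : 0 < m)
    (hP : (σ ^ m) (x : B) ∈ P) (hmin : ∀ j, 0 < j → j < m → (σ ^ j) (x : B) ∉ P) :
    (firstRet σ P x : B) = (σ ^ m) (x : B) := by
  obtain ⟨m', hm', hP', hval, hmin'⟩ := fr_spec σ P x
  have : m' = m := by
    rcases lt_trichotomy m' m with h | h | h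
    · exact absurd hP' (hmin m' hm' h)
    · exact h
    · exact absurd hP (hmin' m hm h)
  rw [hval, this]

/-- `p` is the first point of `P` in the forward `π`-orbit of `z`. -/
def goodFwd (π : Equiv.Perm B) (P : Finset B) (z : B) (p : ↥P) : Prop :=
  ∃ k, (π ^ k) z = ↑p ∧ ∀ j, j < k → (π ^ j) z ∉ P

lemma goodFwd_self (π : Equiv.Perm B) (P : Finset B) (z : B) (hz : z ∈ P) :
    goodFwd π P z ⟨z, hz⟩ := ⟨0, rfl, fun j hj => absurd hj (Nat.not_lt_zero j)⟩

lemma goodFwd_unique {π : Equiv.Perm B} {P : Finset B} {z : B} {p q : ↥P}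
    (hp : goodFwd π P z p) (hq : goodFwd π P z q) : p = q := by
  obtain ⟨k, hk, hkm⟩ := hp
  obtain ⟨l, hl, hlm⟩ := hq
  have : k = l := by
    rcases lt_trichotomy k l with h | h | h
    · exact absurd (hk ▸ p.2) (hlm k h)
    · exact h
    · exact absurd (hl ▸ q.2) (hkm l h)
  apply Subtype.ext
  rw [← hk, ← hl, this]

lemma goodFwd_exists (π : Equiv.Perm B) (P : Finset B) (z : B) (h : ∃ k, (π ^ k) z ∈ P) :
    ∃ p, goodFwd π P z p := by
  classical
  exact ⟨⟨(π ^ Nat.find h) z, Nat.find_spec h⟩, Nat.find h, rfl,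
    fun j hj hP => Nat.find_min h hj hP⟩

lemma pow_apply_succ (π : Equiv.Perm B) (n : ℕ) (z : B) : (π ^ (n + 1)) z = (π ^ n) (π z) := by
  rw [pow_succ]; rfl

lemma goodFwd_step {π : Equiv.Perm B} {P : Finset B} {z : B} (hz : z ∉ P) (p : ↥P) :
    goodFwd π P z p ↔ goodFwd π P (π z) p := by
  constructor
  · rintro ⟨k, hk, hkm⟩
    rcases k with _ | k
    · refine absurd ?_ hz
      have hzp : z = ↑p := by simpa using hk
      rw [hzp]; exact p.2
    · refine ⟨k, by rw [← pow_apply_succ]; exact hk, fun j hj => ?_⟩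
      rw [← pow_apply_succ]
      exact hkm (j + 1) (Nat.succ_lt_succ hj)
  · rintro ⟨k, hk, hkm⟩
    refine ⟨k + 1, by rw [pow_apply_succ]; exact hk, fun j hj => ?_⟩
    rcases j with _ | j
    · simpa using hz
    · rw [pow_apply_succ]
      exact hkm j (Nat.lt_of_succ_lt_succ hj)

lemma goodFwd_ret {π : Equiv.Perm B} {P : Finset B} {z : B} (hz : z ∈ P) :
    goodFwd π P (π z) (firstRet π P ⟨z, hz⟩) := by
  obtain ⟨m, hm, hP, hval, hmin⟩ := fr_spec π P ⟨z, hz⟩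
  refine ⟨m - 1, ?_, fun j hj => ?_⟩
  · rw [← pow_apply_succ, Nat.sub_add_cancel hm]
    exact hval.symm
  · rw [← pow_apply_succ]
    exact hmin (j + 1) (Nat.succ_pos j) (by omega)

lemma meets_transfer (π : Equiv.Perm B) (P : Finset B) (u : B) :
    (∃ k, (π ^ k) u ∈ P) ↔ (∃ k, (π ^ k) (π u) ∈ P) := by
  constructor
  · rintro ⟨k, hk⟩
    rcases k with _ | k
    · exact ⟨orderOf π - 1, by rw [exists_pow_apply_eq]; simpa using hk⟩
    · exact ⟨k, by rw [← pow_apply_succ]; exact hk⟩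
  · rintro ⟨k, hk⟩
    exact ⟨k + 1, by rw [pow_apply_succ]; exact hk⟩

/-- Transfer of equivalence along first-return structure. -/
lemma key_transfer (π : Equiv.Perm B) (P : Finset B) (r : B → B → Prop)
    (s : ↥P → ↥P → Prop)
    (K1 : ∀ u v (hu : u ∈ P), r u v → ∀ q, goodFwd π P v q → Relation.EqvGen s ⟨u, hu⟩ q)
    (K2 : ∀ u v, r u v → u ∉ P → ∀ p, (goodFwd π P u p ↔ goodFwd π P v p))
    (K3 : ∀ u v, r u v → ((∃ k, (π ^ k) u ∈ P) ↔ (∃ k, (π ^ k) v ∈ P))) :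
    ∀ x y : ↥P, Relation.EqvGen r ↑x ↑y → Relation.EqvGen s x y := by
  have main : ∀ u v, Relation.EqvGen r u v →
      ((∃ k, (π ^ k) u ∈ P) ↔ (∃ k, (π ^ k) v ∈ P)) ∧
      ∀ p q, goodFwd π P u p → goodFwd π P v q → Relation.EqvGen s p q := by
    intro u v h
    induction h with
    | rel u v hr =>
      refine ⟨K3 u v hr, ?_⟩
      intro p q gp gq
      by_cases hu : u ∈ P
      · have hp : p = ⟨u, hu⟩ := goodFwd_unique gp (goodFwd_self π P u hu)
        rw [hp]
        exact K1 u v hu hr q gq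
      · have gq' : goodFwd π P u q := (K2 u v hr hu q).mpr gq
        rw [goodFwd_unique gp gq']
        exact Relation.EqvGen.refl q
    | refl u =>
      refine ⟨Iff.rfl, ?_⟩
      intro p q gp gq
      rw [goodFwd_unique gp gq]
      exact Relation.EqvGen.refl q
    | symm u v _ ih =>
      exact ⟨ih.1.symm, fun p q gp gq => Relation.EqvGen.symm _ _ (ih.2 q p gq gp)⟩
    | trans u w v _ _ ih1 ih2 =>
      refine ⟨ih1.1.trans ih2.1, ?_⟩
      intro p q gp gq
      have hw : ∃ k, (π ^ k) w ∈ P := by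
        obtain ⟨k, hk, _⟩ := gp
        exact ih1.1.mp ⟨k, hk ▸ p.2⟩
      obtain ⟨m, gm⟩ := goodFwd_exists π P w hw
      exact Relation.EqvGen.trans _ _ _ (ih1.2 p m gp gm) (ih2.2 m q gm gq)
  intro x y h
  have g1 : goodFwd π P (↑x) x := by
    have := goodFwd_self π P ↑x x.2
    rwa [Subtype.coe_eta] at this
  have g2 : goodFwd π P (↑y) y := by
    have := goodFwd_self π P ↑y y.2
    rwa [Subtype.coe_eta] at this
  exact (main ↑x ↑y h).2 x y g1 g2

end FirstRet

section Core

variable {B : Type} [Fintype B] [DecidableEq B]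

/-- `x` is `r`-connected to the subset `P`. -/
def AP (P : Finset B) (r : B → B → Prop) (x : B) : Prop :=
  ∃ p : ↥P, Relation.EqvGen r x ↑p

lemma core_count (σ0 : Equiv.Perm B) (P : Finset B) (r : B → B → Prop) (s : ↥P → ↥P → Prop)
    (H1 : ∀ x y : ↥P, s x y → Relation.EqvGen r ↑x ↑y)
    (H2 : ∀ x y : ↥P, Relation.EqvGen r ↑x ↑y → Relation.EqvGen s x y)
    (H3a : ∀ x, x ∉ P → r x (σ0 x))
    (H3b : ∀ x, x ∉ P → ∀ y, r x y → σ0 x = y ∨ x = y)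
    (H5 : ∀ (x), x ∈ P → ∀ (y), r x y →
      ∃ p : ↥P, Relation.EqvGen (fun u v => σ0 u = v) y ↑p) :
    Nat.card (Quot r) = Nat.card (Quot s) +
      Nat.card {q : Quot (fun u v : B => σ0 u = v) // ∀ z, Quot.mk _ z = q → z ∉ P} := by
  classical
  have dP : ∀ (x : B), x ∈ P → AP P r x := fun x hx => ⟨⟨x, hx⟩, Relation.EqvGen.refl x⟩
  have dA : ∀ x y, Relation.EqvGen r x y → (AP P r x ↔ AP P r y) := by
    intro x y h
    constructor
    · rintro ⟨p, hp⟩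
      exact ⟨p, Relation.EqvGen.trans _ _ _ (Relation.EqvGen.symm _ _ h) hp⟩
    · rintro ⟨p, hp⟩
      exact ⟨p, Relation.EqvGen.trans _ _ _ h hp⟩
  have dM : ∀ x y, Relation.EqvGen (fun u v => σ0 u = v) x y →
      (AP P (fun u v => σ0 u = v) x ↔ AP P (fun u v => σ0 u = v) y) := by
    intro x y h
    constructor
    · rintro ⟨p, hp⟩
      exact ⟨p, Relation.EqvGen.trans _ _ _ (Relation.EqvGen.symm _ _ h) hp⟩
    · rintro ⟨p, hp⟩
      exact ⟨p, Relation.EqvGen.trans _ _ _ h hp⟩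
  have dMstep : ∀ x y, r x y → (AP P (fun u v => σ0 u = v) x ↔ AP P (fun u v => σ0 u = v) y) := by
    intro x y hr
    by_cases hx : x ∈ P
    · constructor
      · intro _; exact H5 x hx y hr
      · intro _; exact ⟨⟨x, hx⟩, Relation.EqvGen.refl x⟩
    · rcases H3b x hx y hr with h | h
      · exact dM x y (Relation.EqvGen.rel _ _ h)
      · subst h; exact Iff.rfl
  have dAM : ∀ x y, Relation.EqvGen r x y →
      (AP P (fun u v => σ0 u = v) x ↔ AP P (fun u v => σ0 u = v) y) := by
    intro x y h
    induction h with
    | rel u v hr => exact dMstep u v hr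
    | refl u => exact Iff.rfl
    | symm u v _ ih => exact ih.symm
    | trans u v w _ _ ih1 ih2 => exact ih1.trans ih2
  have dAimpM : ∀ x, AP P r x → AP P (fun u v => σ0 u = v) x := by
    rintro x ⟨p, hp⟩
    exact (dAM x ↑p hp).mpr ⟨p, Relation.EqvGen.refl _⟩
  have reachP : ∀ n (z : B), (σ0 ^ n) z ∈ P → AP P r z := by
    intro n
    induction n with
    | zero => intro z hz; exact dP z (by simpa using hz)
    | succ n ih =>
      intro z hz
      by_cases hzP : z ∈ P
      · exact dP z hzP
      · have h2 : (σ0 ^ n) (σ0 z) ∈ P := by rw [← pow_apply_succ]; exact hz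
        exact (dA z (σ0 z) (Relation.EqvGen.rel _ _ (H3a z hzP))).mpr (ih _ h2)
  have dH4 : ∀ x, AP P r x → AP P r (σ0 x) := by
    intro x hAx
    by_cases hx : x ∈ P
    · refine reachP (orderOf σ0 - 1) (σ0 x) ?_
      have h2 : (σ0 ^ (orderOf σ0 - 1)) (σ0 x) = x := exists_pow_apply_eq σ0 x
      rw [h2]
      exact hx
    · exact (dA x (σ0 x) (Relation.EqvGen.rel _ _ (H3a x hx))).mp hAx
  have dSym : ∀ x z, Relation.EqvGen (fun u v => σ0 u = v) x z →
      (¬ AP P r x ∨ ¬ AP P r z) → Relation.EqvGen r x z ∧ (¬ AP P r x ∧ ¬ AP P r z) := by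
    intro x z h
    induction h with
    | rel u v huv =>
      intro hc
      have hnu : ¬ AP P r u := by
        rcases hc with hc | hc
        · exact hc
        · intro hAu
          rw [← huv] at hc
          exact hc (dH4 u hAu)
      have hru : r u v := by
        rw [← huv]
        exact H3a u (fun hP => hnu (dP u hP))
      have he : Relation.EqvGen r u v := Relation.EqvGen.rel _ _ hru
      exact ⟨he, hnu, fun hAv => hnu ((dA u v he).mpr hAv)⟩
    | refl u =>
      intro hc
      have : ¬ AP P r u := by rcases hc with hc | hc <;> exact hc
      exact ⟨Relation.EqvGen.refl u, this, this⟩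
    | symm u v _ ih =>
      intro hc
      obtain ⟨h1, h2, h3⟩ := ih (hc.symm)
      exact ⟨Relation.EqvGen.symm _ _ h1, h3, h2⟩
    | trans u v w _ _ ih1 ih2 =>
      intro hc
      rcases hc with hcu | hcw
      · obtain ⟨e1, _, hnv⟩ := ih1 (Or.inl hcu)
        obtain ⟨e2, _, hnw⟩ := ih2 (Or.inl hnv)
        exact ⟨Relation.EqvGen.trans _ _ _ e1 e2, hcu, hnw⟩
      · obtain ⟨e2, hnv, _⟩ := ih2 (Or.inr hcw)
        obtain ⟨e1, hnu, _⟩ := ih1 (Or.inr hnv)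
        exact ⟨Relation.EqvGen.trans _ _ _ e1 e2, hnu, hcw⟩
  have dIso : ∀ x, ¬ AP P r x → ¬ AP P (fun u v => σ0 u = v) x := by
    rintro x hnx ⟨p, hp⟩
    exact hnx ⟨p, (dSym x ↑p hp (Or.inl hnx)).1⟩
  -- the explicit bijection
  have isoMem : ∀ x : B, ¬ AP P r x → ∀ z, Quot.mk (fun u v : B => σ0 u = v) z =
      Quot.mk (fun u v : B => σ0 u = v) x → z ∉ P := by
    intro x hnx z hz hzP
    have hzx : Relation.EqvGen (fun u v : B => σ0 u = v) z x := Quot.eqvGen_exact hz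
    exact dIso x hnx ⟨⟨z, hzP⟩, Relation.EqvGen.symm _ _ hzx⟩
  set I := {q : Quot (fun u v : B => σ0 u = v) // ∀ z, Quot.mk _ z = q → z ∉ P} with hI
  set F0 : B → Quot s ⊕ I := fun x =>
    if h : AP P r x then Sum.inl (Quot.mk s h.choose)
    else Sum.inr ⟨Quot.mk _ x, isoMem x h⟩ with hF0def
  have hF0 : ∀ x y, r x y → F0 x = F0 y := by
    intro x y hr
    have hxy : Relation.EqvGen r x y := Relation.EqvGen.rel _ _ hr
    by_cases h : AP P r x
    · have h' : AP P r y := (dA _ _ hxy).mp h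
      simp only [hF0def]
      rw [dif_pos h, dif_pos h']
      refine congrArg Sum.inl (Quot.eqvGen_sound (H2 _ _ ?_))
      exact Relation.EqvGen.trans _ _ _
        (Relation.EqvGen.trans _ _ _ (Relation.EqvGen.symm _ _ h.choose_spec) hxy)
        h'.choose_spec
    · have h' : ¬ AP P r y := fun hy => h ((dA _ _ hxy).mpr hy)
      rcases H3b x (fun hP => h (dP x hP)) y hr with he | he
      · simp only [hF0def]
        rw [dif_neg h, dif_neg h']
        exact congrArg Sum.inr (Subtype.ext (Quot.sound he))
      · subst he
        rfl
  have e : Quot r ≃ (Quot s ⊕ I) := by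
    refine ⟨Quot.lift F0 hF0,
      Sum.elim (Quot.lift (fun p : ↥P => Quot.mk r ↑p)
        (fun p q hs => Quot.eqvGen_sound (H1 p q hs)))
        (fun w => Quot.mk r w.1.out), ?_, ?_⟩
    · intro q
      induction q using Quot.ind with
      | _ x =>
        show Sum.elim _ _ (F0 x) = _
        by_cases h : AP P r x
        · simp only [hF0def]
          rw [dif_pos h]
          show Quot.mk r ↑(h.choose) = Quot.mk r x
          exact Quot.eqvGen_sound (Relation.EqvGen.symm _ _ h.choose_spec)
        · simp only [hF0def]
          rw [dif_neg h]
          show Quot.mk r (Quot.mk (fun u v : B => σ0 u = v) x).out = Quot.mk r x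
          have hout : Quot.mk (fun u v : B => σ0 u = v)
              ((Quot.mk (fun u v : B => σ0 u = v) x).out) =
              Quot.mk (fun u v : B => σ0 u = v) x := Quot.out_eq _
          have hzx : Relation.EqvGen (fun u v : B => σ0 u = v)
              ((Quot.mk (fun u v : B => σ0 u = v) x).out) x := Quot.eqvGen_exact hout
          exact Quot.eqvGen_sound (dSym _ _ hzx (Or.inr h)).1
    · intro w
      rcases w with q | ⟨q, hq⟩
      · induction q using Quot.ind with
        | _ p =>
          show F0 ↑p = _
          have h : AP P r (↑p : B) := dP ↑p p.2
          simp only [hF0def]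
          rw [dif_pos h]
          refine congrArg Sum.inl (Quot.eqvGen_sound (H2 _ _ ?_))
          exact Relation.EqvGen.symm _ _ h.choose_spec
      · show F0 q.out = _
        have hnM : ¬ AP P (fun u v => σ0 u = v) q.out := by
          rintro ⟨p, hp⟩
          have hpq : Quot.mk (fun u v : B => σ0 u = v) ↑p = q :=
            (Quot.eqvGen_sound hp).symm.trans (Quot.out_eq q)
          exact hq ↑p hpq p.2
        have hnA : ¬ AP P r q.out := fun h => hnM (dAimpM _ h)
        simp only [hF0def]
        rw [dif_neg hnA]
        exact congrArg Sum.inr (Subtype.ext (Quot.out_eq q))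
  have f1 : Finite (Quot r) := finite_quot r
  have f2 : Finite (Quot s) := finite_quot s
  have f3 : Finite (Quot (fun u v : B => σ0 u = v)) := finite_quot _
  have f4 : Finite I := Subtype.finite
  rw [Nat.card_congr e, Nat.card_sum]

end Core
section Translate

variable {B : Type} [Fintype B] [DecidableEq B]

lemma pow_apply_succ' {α : Type*} (π : Equiv.Perm α) (n : ℕ) (z : α) :
    (π ^ (n + 1)) z = π ((π ^ n) z) := by rw [pow_succ']; rfl

namespace RG

/-- The involution equal to `s1` on the active part and the identity elsewhere. -/
def epsPerm (G : RG B) : Equiv.Perm B where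
  toFun x := if x ∈ G.act then G.s1 x else x
  invFun x := if x ∈ G.act then G.s1 x else x
  left_inv := by
    intro x
    by_cases h : x ∈ G.act
    · simp only [if_pos h, if_pos (G.closed x h), G.invol]
    · simp only [if_neg h]
  right_inv := by
    intro x
    by_cases h : x ∈ G.act
    · simp only [if_pos h, if_pos (G.closed x h), G.invol]
    · simp only [if_neg h]

lemma epsPerm_apply_mem (G : RG B) {x : B} (h : x ∈ G.act) : G.epsPerm x = G.s1 x := by
  simp only [epsPerm, Equiv.coe_fn_mk, if_pos h]

lemma epsPerm_apply_not_mem (G : RG B) {x : B} (h : x ∉ G.act) : G.epsPerm x = x := by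
  simp only [epsPerm, Equiv.coe_fn_mk, if_neg h]

lemma theta_apply_mem (G : RG B) {x : B} (h : x ∈ G.act) :
    (G.s0 * G.epsPerm) x = G.s0 (G.s1 x) := by
  simp only [Equiv.Perm.mul_apply, G.epsPerm_apply_mem h]

lemma theta_apply_not_mem (G : RG B) {x : B} (h : x ∉ G.act) :
    (G.s0 * G.epsPerm) x = G.s0 x := by
  simp only [Equiv.Perm.mul_apply, G.epsPerm_apply_not_mem h]

/-- The face permutation is the first-return map of `s0 ∘ ε`. -/
lemma face_eq (G : RG B) (x : ↥G.act) :
    G.ret0 (G.ret1 x) = firstRet (G.s0 * G.epsPerm) G.act x := by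
  obtain ⟨m, hm, hP, hval, hmin⟩ := fr_spec G.s0 G.act (G.ret1 x)
  have hr1 : ((G.ret1 x : B)) = G.s1 ↑x := rfl
  have claim : ∀ j, 1 ≤ j → j ≤ m →
      ((G.s0 * G.epsPerm) ^ j) (x : B) = (G.s0 ^ j) (G.s1 ↑x) := by
    intro j
    induction j with
    | zero => intro h; omega
    | succ j ih =>
      intro _ hjm
      rcases Nat.eq_zero_or_pos j with hj0 | hj1
      · subst hj0
        simp only [zero_add, pow_one]
        exact G.theta_apply_mem x.2
      · have hj : ((G.s0 * G.epsPerm) ^ j) (x : B) = (G.s0 ^ j) (G.s1 ↑x) :=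
          ih hj1 (le_of_lt (Nat.lt_of_succ_le hjm))
        rw [pow_apply_succ', hj, pow_apply_succ']
        refine G.theta_apply_not_mem ?_
        rw [← hr1]
        exact hmin j hj1 (Nat.lt_of_succ_le hjm)
  apply Subtype.ext
  have h2 : ((G.ret0 (G.ret1 x) : B)) = (G.s0 ^ m) (G.s1 ↑x) := by
    rw [show G.ret0 (G.ret1 x) = firstRet G.s0 G.act (G.ret1 x) from rfl]
    rw [hval, hr1]
  have h3 : (firstRet (G.s0 * G.epsPerm) G.act x : B) = ((G.s0 * G.epsPerm) ^ m) ↑x := by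
    refine fr_char (G.s0 * G.epsPerm) G.act x m hm ?_ ?_
    · rw [claim m hm le_rfl, ← hr1]
      exact hP
    · intro j hj hjm
      rw [claim j hj (le_of_lt hjm), ← hr1]
      exact hmin j hj hjm
  rw [h2, h3, claim m hm le_rfl]

lemma numF_eq (G : RG B) :
    G.numF = Nat.card (Quot (fun x y : B => (G.s0 * G.epsPerm) x = y)) := by
  have H1 : ∀ x y : ↥G.act, (G.ret0 (G.ret1 x) = y) →
      Relation.EqvGen (fun u v : B => (G.s0 * G.epsPerm) u = v) ↑x ↑y := by
    intro x y hxy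
    rw [face_eq] at hxy
    obtain ⟨m, hm, hP, hval, hmin⟩ := fr_spec (G.s0 * G.epsPerm) G.act x
    have : (y : B) = ((G.s0 * G.epsPerm) ^ m) ↑x := by rw [← hxy, hval]
    rw [this]
    exact eqvGen_iterate (G.s0 * G.epsPerm) m (↑x : B)
  have H2 : ∀ x y : ↥G.act, Relation.EqvGen (fun u v : B => (G.s0 * G.epsPerm) u = v) ↑x ↑y →
      Relation.EqvGen (fun a b : ↥G.act => G.ret0 (G.ret1 a) = b) x y := by
    refine key_transfer (G.s0 * G.epsPerm) G.act _ _ ?_ ?_ ?_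
    · intro u v hu hr q hq
      have hgp : goodFwd (G.s0 * G.epsPerm) G.act v (firstRet (G.s0 * G.epsPerm) G.act ⟨u, hu⟩) := by
        rw [← hr]
        exact goodFwd_ret hu
      have : q = firstRet (G.s0 * G.epsPerm) G.act ⟨u, hu⟩ := goodFwd_unique hq hgp
      refine Relation.EqvGen.rel _ _ ?_
      rw [face_eq, this]
    · intro u v hr hu p
      rw [← hr]
      exact goodFwd_step hu p
    · intro u v hr
      rw [← hr]
      exact meets_transfer _ _ u
  have H3a : ∀ x, x ∉ G.act → (G.s0 * G.epsPerm) x = G.s0 x := fun x hx =>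
    G.theta_apply_not_mem hx
  have := core_count G.s0 G.act (fun u v : B => (G.s0 * G.epsPerm) u = v)
    (fun a b : ↥G.act => G.ret0 (G.ret1 a) = b) H1 H2 H3a
    (fun x hx y hxy => Or.inl ((H3a x hx).symm.trans hxy))
    (by
      intro x hx y hxy
      refine ⟨⟨G.s1 x, G.closed x hx⟩, Relation.EqvGen.symm _ _ (Relation.EqvGen.rel _ _ ?_)⟩
      rw [← hxy, G.theta_apply_mem hx])
  rw [numF, orbCount, isolated]
  exact this.symm

lemma numK_eq (G : RG B) :
    G.numK = Nat.card (Quot (fun x y : B => G.s0 x = y ∨ G.epsPerm x = y)) := by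
  have H1 : ∀ x y : ↥G.act, (G.ret0 x = y ∨ G.ret1 x = y) →
      Relation.EqvGen (fun u v : B => G.s0 u = v ∨ G.epsPerm u = v) ↑x ↑y := by
    intro x y hxy
    rcases hxy with h | h
    · obtain ⟨m, hm, hP, hval, hmin⟩ := fr_spec G.s0 G.act x
      have hy : (y : B) = (G.s0 ^ m) ↑x := by
        rw [← h]
        exact hval
      rw [hy]
      refine eqvGen_of_step (r := fun u v : B => G.s0 u = v) ?_ (eqvGen_iterate G.s0 m ↑x)
      intro u v huv
      exact Relation.EqvGen.rel _ _ (Or.inl huv)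
    · refine Relation.EqvGen.rel _ _ (Or.inr ?_)
      rw [G.epsPerm_apply_mem x.2]
      rw [← h]
      rfl
  have H2 : ∀ x y : ↥G.act,
      Relation.EqvGen (fun u v : B => G.s0 u = v ∨ G.epsPerm u = v) ↑x ↑y →
      Relation.EqvGen (fun a b : ↥G.act => G.ret0 a = b ∨ G.ret1 a = b) x y := by
    refine key_transfer G.s0 G.act _ _ ?_ ?_ ?_
    · intro u v hu hr q hq
      rcases hr with h | h
      · have hgp : goodFwd G.s0 G.act v (firstRet G.s0 G.act ⟨u, hu⟩) := by
          rw [← h]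
          exact goodFwd_ret hu
        refine Relation.EqvGen.rel _ _ (Or.inl ?_)
        show firstRet G.s0 G.act ⟨u, hu⟩ = q
        exact (goodFwd_unique hq hgp).symm
      · have hv : v ∈ G.act := by
          rw [← h, G.epsPerm_apply_mem hu]
          exact G.closed u hu
        have : q = ⟨v, hv⟩ := goodFwd_unique hq (goodFwd_self _ _ v hv)
        refine Relation.EqvGen.rel _ _ (Or.inr ?_)
        rw [this]
        apply Subtype.ext
        show G.s1 u = v
        rw [← G.epsPerm_apply_mem hu]
        exact h
    · intro u v hr hu p
      rcases hr with h | h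
      · rw [← h]
        exact goodFwd_step hu p
      · rw [G.epsPerm_apply_not_mem hu] at h
        rw [← h]
    · intro u v hr
      rcases hr with h | h
      · rw [← h]
        exact meets_transfer _ _ u
      · by_cases hu : u ∈ G.act
        · have hv : v ∈ G.act := by
            rw [← h, G.epsPerm_apply_mem hu]
            exact G.closed u hu
          exact iff_of_true ⟨0, by simpa using hu⟩ ⟨0, by simpa using hv⟩
        · rw [G.epsPerm_apply_not_mem hu] at h
          rw [← h]
  have := core_count G.s0 G.act (fun u v : B => G.s0 u = v ∨ G.epsPerm u = v)
    (fun a b : ↥G.act => G.ret0 a = b ∨ G.ret1 a = b) H1 H2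
    (fun x _ => Or.inl rfl)
    (by
      intro x hx y hxy
      rcases hxy with h | h
      · exact Or.inl h
      · rw [G.epsPerm_apply_not_mem hx] at h
        exact Or.inr h)
    (by
      intro x hx y hxy
      rcases hxy with h | h
      · exact ⟨⟨x, hx⟩, Relation.EqvGen.symm _ _ (Relation.EqvGen.rel _ _ h)⟩
      · have hy : y ∈ G.act := by
          rw [← h, G.epsPerm_apply_mem hx]
          exact G.closed x hx
        exact ⟨⟨y, hy⟩, Relation.EqvGen.refl y⟩)
  rw [numK, orbCount, isolated]
  exact this.symm

end RG

end Translate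
section Main

variable {B : Type} [Fintype B] [DecidableEq B]

lemma aux_edgeOf_s1 (D : RibbonGraph B) (a : B) :
    D.toRG.edgeOf (D.s1 a) = D.toRG.edgeOf a := by
  show ({D.s1 a, D.s1 (D.s1 a)} : Finset B) = {a, D.s1 a}
  rw [D.invol a]
  exact Finset.pair_comm _ _

lemma aux_edgeOf_eq (D : RibbonGraph B) (a c : B) (h : D.toRG.edgeOf c = D.toRG.edgeOf a) :
    c = a ∨ c = D.s1 a := by
  have hc : c ∈ D.toRG.edgeOf c := Finset.mem_insert_self _ _
  rw [h] at hc
  simpa [RG.edgeOf, RibbonGraph.toRG] using hc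

lemma aux_edgeOf_eq_iff (D : RibbonGraph B) (a c : B) :
    D.toRG.edgeOf c = D.toRG.edgeOf a ↔ (c = a ∨ c = D.s1 a) := by
  constructor
  · exact aux_edgeOf_eq D a c
  · rintro (rfl | rfl)
    · rfl
    · exact aux_edgeOf_s1 D a

lemma aux_contr_edges (D : RibbonGraph B) (a : B) :
    (D.toRG.contr a).edges = D.toRG.edges.erase (D.toRG.edgeOf a) := by
  ext t
  simp only [RG.edges, Finset.mem_image, Finset.mem_erase]
  constructor
  · rintro ⟨c, hc, rfl⟩
    have hc' : c ≠ a ∧ c ≠ D.s1 a := by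
      simp only [RG.contr, RibbonGraph.toRG, Finset.mem_sdiff, Finset.mem_insert,
        Finset.mem_singleton] at hc
      exact ⟨fun h => hc.2 (Or.inl h), fun h => hc.2 (Or.inr h)⟩
    refine ⟨?_, ⟨c, Finset.mem_univ c, rfl⟩⟩
    intro heq
    rcases aux_edgeOf_eq D a c heq with h | h
    · exact hc'.1 h
    · exact hc'.2 h
  · rintro ⟨hne, c, _, rfl⟩
    refine ⟨c, ?_, rfl⟩
    show c ∈ D.toRG.act \ {a, D.toRG.s1 a}
    simp only [RibbonGraph.toRG, Finset.mem_sdiff, Finset.mem_insert, Finset.mem_singleton,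
      Finset.mem_univ, true_and]
    rintro (rfl | rfl)
    · exact hne rfl
    · exact hne (aux_edgeOf_s1 D a)

lemma aux_biUnion_closed (D : RibbonGraph B) (S : Finset (Finset B))
    (hS : S ⊆ D.toRG.edges) {x : B} (hx : x ∈ S.biUnion id) : D.s1 x ∈ S.biUnion id := by
  rw [Finset.mem_biUnion] at hx ⊢
  obtain ⟨t, ht, hxt⟩ := hx
  obtain ⟨c, _, rfl⟩ := Finset.mem_image.mp (hS ht)
  refine ⟨_, ht, ?_⟩
  have : x = c ∨ x = D.s1 c := by simpa [RG.edgeOf, RibbonGraph.toRG] using hxt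
  rcases this with rfl | rfl
  · simp [RG.edgeOf, RibbonGraph.toRG]
  · simp [RG.edgeOf, RibbonGraph.toRG, D.invol]

lemma aux_not_mem_biUnion (D : RibbonGraph B) (a : B) (S : Finset (Finset B))
    (hS : S ⊆ D.toRG.edges.erase (D.toRG.edgeOf a)) {x : B}
    (hx : x = a ∨ x = D.s1 a) : x ∉ S.biUnion id := by
  intro hmem
  rw [Finset.mem_biUnion] at hmem
  obtain ⟨t, ht, hxt⟩ := hmem
  have ht' := hS ht
  rw [Finset.mem_erase] at ht'
  obtain ⟨c, _, rfl⟩ := Finset.mem_image.mp ht'.2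
  have hxc : x = c ∨ x = D.s1 c := by simpa [RG.edgeOf, RibbonGraph.toRG] using hxt
  apply ht'.1
  rw [aux_edgeOf_eq_iff]
  rcases hx with rfl | rfl
  · rcases hxc with rfl | h
    · exact Or.inl rfl
    · right
      rw [h, D.invol]
  · rcases hxc with h | h
    · right
      rw [← h]
    · left
      have := congrArg D.s1 h
      rw [D.invol, D.invol] at this
      rw [this]

end Main
section Main2

variable {B : Type} [Fintype B] [DecidableEq B]

lemma RG.mem_spanning_act (G : RG B) (S : Finset (Finset B)) (x : B) :
    x ∈ (G.spanning S).act ↔ x ∈ G.act ∧ (x ∈ S.biUnion id ∧ G.s1 x ∈ S.biUnion id) :=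
  Finset.mem_filter

lemma RG.mem_contr_act (G : RG B) (a x : B) :
    x ∈ (G.contr a).act ↔ x ∈ G.act ∧ x ∉ ({a, G.s1 a} : Finset B) :=
  Finset.mem_sdiff

lemma aux_act_spanning (D : RibbonGraph B) (a : B) (S : Finset (Finset B))
    (hS : S ⊆ D.toRG.edges.erase (D.toRG.edgeOf a)) :
    ((D.toRG.contr a).spanning S).act = (D.toRG.spanning S).act := by
  ext x
  simp only [RG.mem_spanning_act, RG.mem_contr_act, RibbonGraph.toRG, Finset.mem_filter, Finset.mem_sdiff,
    Finset.mem_univ, true_and, Finset.mem_insert, Finset.mem_singleton]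
  constructor
  · rintro ⟨_, h2⟩
    exact h2
  · intro h2
    refine ⟨?_, h2⟩
    intro hx
    exact aux_not_mem_biUnion D a S hS hx h2.1

lemma aux_a_not_mem_act (D : RibbonGraph B) (a : B) (S : Finset (Finset B))
    (hS : S ⊆ D.toRG.edges.erase (D.toRG.edgeOf a)) {x : B} (hx : x = a ∨ x = D.s1 a) :
    x ∉ (D.toRG.spanning S).act := by
  intro hmem
  simp only [RG.mem_spanning_act, RibbonGraph.toRG, Finset.mem_filter] at hmem
  exact aux_not_mem_biUnion D a S hS hx hmem.2.1

lemma aux_eps_congr (G1 G2 : RG B) (h1 : G1.act = G2.act) (h2 : G1.s1 = G2.s1) :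
    G1.epsPerm = G2.epsPerm := by
  apply Equiv.ext
  intro x
  simp only [RG.epsPerm, Equiv.coe_fn_mk, h1, h2]

lemma aux_eps_spanning (D : RibbonGraph B) (a : B) (S : Finset (Finset B))
    (hS : S ⊆ D.toRG.edges.erase (D.toRG.edgeOf a)) :
    ((D.toRG.contr a).spanning S).epsPerm = (D.toRG.spanning S).epsPerm :=
  aux_eps_congr _ _ (aux_act_spanning D a S hS) rfl

lemma aux_act_insert (D : RibbonGraph B) (a : B) (S : Finset (Finset B))
    (hS : S ⊆ D.toRG.edges.erase (D.toRG.edgeOf a)) :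
    (D.toRG.spanning (insert (D.toRG.edgeOf a) S)).act =
      insert a (insert (D.s1 a) (D.toRG.spanning S).act) := by
  have hSE : S ⊆ D.toRG.edges := hS.trans (Finset.erase_subset _ _)
  ext x
  simp only [RG.mem_spanning_act, RibbonGraph.toRG, Finset.mem_filter, Finset.mem_univ, true_and,
    Finset.biUnion_insert, Finset.mem_union, Finset.mem_insert]
  constructor
  · rintro ⟨h1, _⟩
    rcases h1 with h1 | h1
    · have : x = a ∨ x = D.s1 a := by simpa [RG.edgeOf, RibbonGraph.toRG] using h1
      rcases this with rfl | rfl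
      · exact Or.inl rfl
      · exact Or.inr (Or.inl rfl)
    · exact Or.inr (Or.inr ⟨h1, aux_biUnion_closed D S hSE h1⟩)
  · intro hx
    have hma : a ∈ D.toRG.edgeOf a := Finset.mem_insert_self _ _
    have hmb : D.s1 a ∈ D.toRG.edgeOf a := by
      refine Finset.mem_insert_of_mem ?_
      show D.s1 a ∈ {D.toRG.s1 a}
      exact Finset.mem_singleton_self _
    rcases hx with rfl | rfl | hx
    · exact ⟨Or.inl hma, Or.inl hmb⟩
    · refine ⟨Or.inl hmb, Or.inl ?_⟩
      show D.s1 (D.s1 a) ∈ _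
      rw [D.invol]
      exact hma
    · exact ⟨Or.inr hx.1, Or.inr hx.2⟩

lemma aux_eps_insert (D : RibbonGraph B) (a : B) (S : Finset (Finset B))
    (hS : S ⊆ D.toRG.edges.erase (D.toRG.edgeOf a)) :
    (D.toRG.spanning (insert (D.toRG.edgeOf a) S)).epsPerm =
      (D.toRG.spanning S).epsPerm * Equiv.swap a (D.s1 a) := by
  have hb : D.s1 a ≠ a := D.fpf a
  have hnota : a ∉ (D.toRG.spanning S).act := aux_a_not_mem_act D a S hS (Or.inl rfl)
  have hnotb : D.s1 a ∉ (D.toRG.spanning S).act := aux_a_not_mem_act D a S hS (Or.inr rfl)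
  apply Equiv.ext
  intro x
  rw [Equiv.Perm.mul_apply]
  by_cases hxa : x = a
  · rw [hxa]
    rw [Equiv.swap_apply_left]
    rw [(D.toRG.spanning S).epsPerm_apply_not_mem hnotb]
    rw [(D.toRG.spanning (insert (D.toRG.edgeOf a) S)).epsPerm_apply_mem
      (by rw [aux_act_insert D a S hS]; exact Finset.mem_insert_self _ _)]
    rfl
  by_cases hxb : x = D.s1 a
  · rw [hxb]
    rw [Equiv.swap_apply_right]
    rw [(D.toRG.spanning S).epsPerm_apply_not_mem hnota]
    rw [(D.toRG.spanning (insert (D.toRG.edgeOf a) S)).epsPerm_apply_mem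
      (by rw [aux_act_insert D a S hS]
          exact Finset.mem_insert_of_mem (Finset.mem_insert_self _ _))]
    show D.s1 (D.s1 a) = a
    exact D.invol a
  · rw [Equiv.swap_apply_of_ne_of_ne hxa hxb]
    by_cases hx : x ∈ (D.toRG.spanning S).act
    · rw [(D.toRG.spanning S).epsPerm_apply_mem hx]
      rw [(D.toRG.spanning (insert (D.toRG.edgeOf a) S)).epsPerm_apply_mem
        (by rw [aux_act_insert D a S hS]
            exact Finset.mem_insert_of_mem (Finset.mem_insert_of_mem hx))]
      rfl
    · rw [(D.toRG.spanning S).epsPerm_apply_not_mem hx]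
      rw [(D.toRG.spanning (insert (D.toRG.edgeOf a) S)).epsPerm_apply_not_mem
        (by rw [aux_act_insert D a S hS]
            simp only [Finset.mem_insert]
            push_neg
            exact ⟨hxa, hxb, hx⟩)]

lemma aux_swap_comm (D : RibbonGraph B) (a : B) (S : Finset (Finset B))
    (hS : S ⊆ D.toRG.edges.erase (D.toRG.edgeOf a)) :
    (D.toRG.spanning S).epsPerm * Equiv.swap a (D.s1 a) =
      Equiv.swap a (D.s1 a) * (D.toRG.spanning S).epsPerm := by
  have hnota : a ∉ (D.toRG.spanning S).act := aux_a_not_mem_act D a S hS (Or.inl rfl)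
  have hnotb : D.s1 a ∉ (D.toRG.spanning S).act := aux_a_not_mem_act D a S hS (Or.inr rfl)
  apply Equiv.ext
  intro x
  rw [Equiv.Perm.mul_apply, Equiv.Perm.mul_apply]
  by_cases hxa : x = a
  · rw [hxa]
    rw [Equiv.swap_apply_left, (D.toRG.spanning S).epsPerm_apply_not_mem hnotb,
      (D.toRG.spanning S).epsPerm_apply_not_mem hnota, Equiv.swap_apply_left]
  by_cases hxb : x = D.s1 a
  · rw [hxb]
    rw [Equiv.swap_apply_right, (D.toRG.spanning S).epsPerm_apply_not_mem hnota,
      (D.toRG.spanning S).epsPerm_apply_not_mem hnotb, Equiv.swap_apply_right]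
  · rw [Equiv.swap_apply_of_ne_of_ne hxa hxb]
    by_cases hx : x ∈ (D.toRG.spanning S).act
    · rw [(D.toRG.spanning S).epsPerm_apply_mem hx]
      have hmem : (D.toRG.spanning S).s1 x ∈ (D.toRG.spanning S).act :=
        (D.toRG.spanning S).closed x hx
      refine (Equiv.swap_apply_of_ne_of_ne ?_ ?_).symm
      · intro hc; rw [hc] at hmem; exact hnota hmem
      · intro hc; rw [hc] at hmem; exact hnotb hmem
    · rw [(D.toRG.spanning S).epsPerm_apply_not_mem hx]
      exact (Equiv.swap_apply_of_ne_of_ne hxa hxb).symm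

lemma aux_theta_insert (D : RibbonGraph B) (a : B) (S : Finset (Finset B))
    (hS : S ⊆ D.toRG.edges.erase (D.toRG.edgeOf a)) :
    (D.toRG.spanning (insert (D.toRG.edgeOf a) S)).s0 *
      (D.toRG.spanning (insert (D.toRG.edgeOf a) S)).epsPerm =
    (D.toRG.spanning S).s0 * (D.toRG.spanning S).epsPerm * Equiv.swap a (D.s1 a) := by
  rw [aux_eps_insert D a S hS]
  rw [mul_assoc]
  rfl

lemma aux_theta_contr (D : RibbonGraph B) (a : B) (S : Finset (Finset B))
    (hS : S ⊆ D.toRG.edges.erase (D.toRG.edgeOf a)) :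
    ((D.toRG.contr a).spanning S).s0 * ((D.toRG.contr a).spanning S).epsPerm =
    (D.toRG.spanning S).s0 * (D.toRG.spanning S).epsPerm * Equiv.swap a (D.s1 a) := by
  rw [aux_eps_spanning D a S hS]
  show D.s0 * Equiv.swap a (D.s1 a) * (D.toRG.spanning S).epsPerm = _
  rw [mul_assoc, ← aux_swap_comm D a S hS, ← mul_assoc]
  rfl

end Main2
section Main3

variable {B : Type} [Fintype B] [DecidableEq B]

lemma aux_epsG (D : RibbonGraph B) : D.toRG.epsPerm = D.s1 := by
  apply Equiv.ext
  intro x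
  exact D.toRG.epsPerm_apply_mem (Finset.mem_univ x)

lemma aux_mem_del (D : RibbonGraph B) (a : B) {x : B} (hxa : x ≠ a) (hxb : x ≠ D.s1 a) :
    x ∈ (D.toRG.del a).act := by
  show x ∈ D.toRG.act \ {a, D.toRG.s1 a}
  rw [Finset.mem_sdiff]
  refine ⟨Finset.mem_univ x, ?_⟩
  simp only [Finset.mem_insert, Finset.mem_singleton]
  push_neg
  exact ⟨hxa, hxb⟩

lemma aux_no_path (D : RibbonGraph B) (a : B) (h : D.toRG.IsBridge a) :
    ¬ Relation.EqvGen
      (fun x y : B => (D.toRG.del a).s0 x = y ∨ (D.toRG.del a).epsPerm x = y) a (D.s1 a) := by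
  intro hcon
  have hK := D.toRG.numK_eq
  have hKW := (D.toRG.del a).numK_eq
  have h12 : ∀ x y : B, (D.toRG.s0 x = y ∨ D.toRG.epsPerm x = y) →
      Relation.EqvGen
        (fun x y : B => (D.toRG.del a).s0 x = y ∨ (D.toRG.del a).epsPerm x = y) x y := by
    intro x y hr
    rcases hr with hr | hr
    · exact Relation.EqvGen.rel _ _ (Or.inl hr)
    · rw [aux_epsG D] at hr
      by_cases hxa : x = a
      · rw [hxa] at hr ⊢
        rw [← hr]
        exact hcon
      by_cases hxb : x = D.s1 a
      · rw [hxb] at hr ⊢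
        rw [D.invol a] at hr
        rw [← hr]
        exact Relation.EqvGen.symm _ _ hcon
      · refine Relation.EqvGen.rel _ _ (Or.inr ?_)
        rw [(D.toRG.del a).epsPerm_apply_mem (aux_mem_del D a hxa hxb)]
        exact hr
  have h21 : ∀ x y : B,
      ((D.toRG.del a).s0 x = y ∨ (D.toRG.del a).epsPerm x = y) →
      Relation.EqvGen (fun x y : B => D.toRG.s0 x = y ∨ D.toRG.epsPerm x = y) x y := by
    intro x y hr
    rcases hr with hr | hr
    · exact Relation.EqvGen.rel _ _ (Or.inl hr)
    · by_cases hmem : x ∈ (D.toRG.del a).act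
      · rw [(D.toRG.del a).epsPerm_apply_mem hmem] at hr
        refine Relation.EqvGen.rel _ _ (Or.inr ?_)
        rw [aux_epsG D]
        exact hr
      · rw [(D.toRG.del a).epsPerm_apply_not_mem hmem] at hr
        rw [← hr]
        exact Relation.EqvGen.refl x
  have hcard : Nat.card (Quot (fun x y : B => D.toRG.s0 x = y ∨ D.toRG.epsPerm x = y)) =
      Nat.card (Quot (fun x y : B =>
        (D.toRG.del a).s0 x = y ∨ (D.toRG.del a).epsPerm x = y)) :=
    Nat.card_congr (quotEquivOfEqvGen h12 h21)
  have hbr : (D.toRG.del a).numK = D.toRG.numK + 1 := h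
  rw [hK, hKW, hcard] at hbr
  omega

lemma aux_no_path_S (D : RibbonGraph B) (a : B) (h : D.toRG.IsBridge a)
    (S : Finset (Finset B)) (hS : S ⊆ D.toRG.edges.erase (D.toRG.edgeOf a)) :
    ¬ Relation.EqvGen (fun x y : B =>
      ((D.toRG.spanning S).s0 * (D.toRG.spanning S).epsPerm) x = y) a (D.s1 a) := by
  intro hcon
  apply aux_no_path D a h
  refine eqvGen_of_step ?_ hcon
  intro x y hr
  have hr' : (D.toRG.del a).s0 ((D.toRG.spanning S).epsPerm x) = y := hr
  have hstep1 : Relation.EqvGen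
      (fun x y : B => (D.toRG.del a).s0 x = y ∨ (D.toRG.del a).epsPerm x = y) x
      ((D.toRG.spanning S).epsPerm x) := by
    by_cases hx : x ∈ (D.toRG.spanning S).act
    · rw [(D.toRG.spanning S).epsPerm_apply_mem hx]
      have hxa : x ≠ a := fun hc => aux_a_not_mem_act D a S hS (Or.inl hc) hx
      have hxb : x ≠ D.s1 a := fun hc => aux_a_not_mem_act D a S hS (Or.inr hc) hx
      refine Relation.EqvGen.rel _ _ (Or.inr ?_)
      rw [(D.toRG.del a).epsPerm_apply_mem (aux_mem_del D a hxa hxb)]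
      rfl
    · rw [(D.toRG.spanning S).epsPerm_apply_not_mem hx]
      exact Relation.EqvGen.refl x
  exact Relation.EqvGen.trans _ _ _ hstep1 (Relation.EqvGen.rel _ _ (Or.inl hr'))

lemma aux_L1 (D : RibbonGraph B) (a : B) (S : Finset (Finset B))
    (hS : S ⊆ D.toRG.edges.erase (D.toRG.edgeOf a)) :
    (D.toRG.spanning (insert (D.toRG.edgeOf a) S)).numF =
      ((D.toRG.contr a).spanning S).numF := by
  rw [RG.numF_eq, RG.numF_eq, aux_theta_insert D a S hS, aux_theta_contr D a S hS]

lemma aux_L2 (D : RibbonGraph B) (a : B) (h : D.toRG.IsBridge a) (S : Finset (Finset B))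
    (hS : S ⊆ D.toRG.edges.erase (D.toRG.edgeOf a)) :
    (D.toRG.spanning S).numF = ((D.toRG.contr a).spanning S).numF + 1 := by
  rw [RG.numF_eq, RG.numF_eq, aux_theta_contr D a S hS]
  exact count_swap _ a (D.s1 a) (Ne.symm (D.fpf a)) (aux_no_path_S D a h S hS)

lemma aux_numF_pos (G : RG B) (x : B) : 1 ≤ G.numF := by
  rw [G.numF_eq]
  have h1 : Finite (Quot (fun x y : B => (G.s0 * G.epsPerm) x = y)) := finite_quot _
  have h2 : Nonempty (Quot (fun x y : B => (G.s0 * G.epsPerm) x = y)) := ⟨Quot.mk _ x⟩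
  exact Nat.card_pos

lemma key_alg (m : ℤ) (j : ℕ) :
    LaurentPolynomial.T m * RG.lDelta ^ (j + 1) + LaurentPolynomial.T (m - 2) * RG.lDelta ^ j =
    -(LaurentPolynomial.T 3) * (LaurentPolynomial.T (m - 1) * RG.lDelta ^ j) := by
  have hA : LaurentPolynomial.T m * RG.lDelta + LaurentPolynomial.T (m - 2) =
      -LaurentPolynomial.T (m + 2) := by
    rw [RG.lDelta]
    rw [mul_sub, mul_neg, ← LaurentPolynomial.T_add, ← LaurentPolynomial.T_add]
    rw [show m + -2 = m - 2 by ring]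
    ring
  have hB : -(LaurentPolynomial.T 3) * LaurentPolynomial.T (m - 1) =
      (-LaurentPolynomial.T (m + 2) : LaurentPolynomial ℤ) := by
    rw [neg_mul, ← LaurentPolynomial.T_add]
    rw [show (3 : ℤ) + (m - 1) = m + 2 by ring]
  calc LaurentPolynomial.T m * RG.lDelta ^ (j + 1) + LaurentPolynomial.T (m - 2) * RG.lDelta ^ j
      = (LaurentPolynomial.T m * RG.lDelta + LaurentPolynomial.T (m - 2)) * RG.lDelta ^ j := by
        rw [pow_succ]; ring
    _ = -LaurentPolynomial.T (m + 2) * RG.lDelta ^ j := by rw [hA]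
    _ = -(LaurentPolynomial.T 3) * (LaurentPolynomial.T (m - 1) * RG.lDelta ^ j) := by
        rw [← hB]; ring

end Main3

/-- If the edge `e = {a, σ₁ a}` is a bridge, then `⟨𝔻⟩ = −A³ ⟨𝔻/e⟩`. -/
theorem bracket_bridge (D : RibbonGraph B) (a : B) (h : D.toRG.IsBridge a) :
    D.toRG.bracket = -(LaurentPolynomial.T 3) * (D.toRG.contr a).bracket := by
  classical
  have he : D.toRG.edgeOf a ∈ D.toRG.edges :=
    Finset.mem_image_of_mem _ (Finset.mem_univ a)
  have hni : D.toRG.edgeOf a ∉ D.toRG.edges.erase (D.toRG.edgeOf a) :=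
    Finset.notMem_erase _ _
  have hE : D.toRG.edges = insert (D.toRG.edgeOf a) (D.toRG.edges.erase (D.toRG.edgeOf a)) :=
    (Finset.insert_erase he).symm
  have hnE : 1 ≤ D.toRG.numE := Finset.card_pos.mpr ⟨_, he⟩
  have hnEc : (D.toRG.contr a).numE = D.toRG.numE - 1 := by
    show (D.toRG.contr a).edges.card = D.toRG.edges.card - 1
    rw [aux_contr_edges D a, Finset.card_erase_of_mem he]
  have hnE' : ((D.toRG.contr a).numE : ℤ) = (D.toRG.numE : ℤ) - 1 := by
    rw [hnEc]
    omega
  unfold RG.bracket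
  rw [aux_contr_edges D a]
  conv_lhs => rw [hE]
  rw [Finset.sum_powerset_insert hni]
  rw [Finset.mul_sum]
  rw [← Finset.sum_add_distrib]
  refine Finset.sum_congr rfl ?_
  intro S hSmem
  have hS : S ⊆ D.toRG.edges.erase (D.toRG.edgeOf a) := Finset.mem_powerset.mp hSmem
  have heS : D.toRG.edgeOf a ∉ S := fun hc => hni (hS hc)
  have hk := aux_L2 D a h S hS
  have hk1 : 1 ≤ ((D.toRG.contr a).spanning S).numF := aux_numF_pos _ a
  obtain ⟨j, hj⟩ : ∃ j, ((D.toRG.contr a).spanning S).numF = j + 1 :=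
    ⟨((D.toRG.contr a).spanning S).numF - 1, by omega⟩
  have hL1 := aux_L1 D a S hS
  rw [hk, hL1, hj]
  rw [Finset.card_insert_of_notMem heS]
  simp only [Nat.add_sub_cancel]
  have h2 : ((D.toRG.numE : ℤ) - 2 * ((S.card + 1 : ℕ) : ℤ)) =
      ((D.toRG.numE : ℤ) - 2 * (S.card : ℤ)) - 2 := by push_cast; ring
  have h3 : (((D.toRG.contr a).numE : ℤ) - 2 * (S.card : ℤ)) =
      ((D.toRG.numE : ℤ) - 2 * (S.card : ℤ)) - 1 := by rw [hnE']; ring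
  rw [h2, h3]
  exact key_alg _ j
end
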